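/- arXiv:2110.03108 — 11 statements merged into one kernel-verified Lean document; each statement's English description precedes it below -/
import Mathlib

section
/- Let R be a (possibly noncommutative) ring, n a positive integer, and p a nonnegative integer. Given elements h_{k,i} ∈ R for all k ∈ ℤ and i ∈ [n], define for each α ∈ ℤ^n the element t_α := rowdet((h_{α_i + j, i})_{i,j ∈ [n]}), where rowdet((a_{i,j})) = Σ_{σ ∈ S_n} sgn(σ) a_{1,σ(1)} a_{2,σ(2)} ⋯ a_{n,σ(n)}. Let η = (1, 2, …, n-1, n+p) ∈ ℤ^n. Then for any α ∈ ℤ^n, Σ_{β ∈ ℕ^n, |β| = p} t_{α+β} = rowdet((h_{α_i + η_j, i})_{i,j ∈ [n]}), where |β| denotes β_1 + ⋯ + β_n and α+β is the entrywise sum. -/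
/-- The row-determinant of a square matrix over a (possibly noncommutative) ring:
the sum over all permutations σ of sgn(σ) · a_{1,σ(1)} a_{2,σ(2)} ⋯ a_{n,σ(n)},
with the factors multiplied in order of increasing row index. -/
def rowdet {R : Type*} [Ring R] {n : ℕ} (A : Matrix (Fin n) (Fin n) R) : R :=
  ∑ σ : Equiv.Perm (Fin n), (Equiv.Perm.sign σ : ℤ) • (List.ofFn fun i => A i (σ i)).prod

/-!
After absorbing `α` into `h`, both sides expand into signed ordered monomials
`h (c 1) 1 ⋯ h (c n) n`. On the left the monomial `c` comes from the pairs `(σ, β)` with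
`c i = β i + σ i + 1`, so its coefficient is `∑ σ, sgn σ · [σ i < c i for all i]`, the determinant
of the 0-1 matrix with entries `[j < c i]`. Column `i` of this matrix only depends on
`min (c i) n`: the determinant vanishes when two of these truncations agree, and otherwise they
are `τ (1), …, τ (n)` for a permutation `τ`; then `|c| = p + n(n+1)/2` forces `c = η ∘ τ` and the
determinant is `sgn τ`, which is the coefficient of `c` on the right.
-/

open Finset Equiv

namespace PrePieri

variable {n : ℕ}

theorem sum_antidiagonalTuple_add {M : Type*} [AddCommMonoid M] {p : ℕ} (s : Fin n → ℤ)
    (S : Finset (Fin n → ℤ))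
    (hS : ∀ β ∈ Nat.antidiagonalTuple n p, (fun i => (β i : ℤ) + s i) ∈ S)
    (hsum : ∀ c ∈ S, ∑ i, c i = p + ∑ i, s i) (F : (Fin n → ℤ) → M) :
    ∑ β ∈ Nat.antidiagonalTuple n p, F (fun i => (β i : ℤ) + s i)
      = ∑ c ∈ S with ∀ i, s i ≤ c i, F c := by
  refine sum_nbij' (fun β i => (β i : ℤ) + s i) (fun c i => (c i - s i).toNat) ?_ ?_ ?_ ?_ ?_
  · intro β hβ
    simp only [mem_filter]
    exact ⟨hS β hβ, fun i => by omega⟩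
  · intro c hc
    rw [mem_filter] at hc
    rw [Nat.mem_antidiagonalTuple]
    have hexcess : ∑ i, (c i - s i) = p := by rw [sum_sub_distrib, hsum c hc.1]; ring
    zify
    rw [← hexcess]
    exact sum_congr rfl fun i _ => Int.toNat_of_nonneg (by linarith [hc.2 i])
  · intro β _
    funext i
    simp
  · intro c hc
    rw [mem_filter] at hc
    funext i
    have := hc.2 i
    dsimp only
    omega
  · intro β _
    rfl

def stairMatrix (c : Fin n → ℤ) : Matrix (Fin n) (Fin n) ℤ :=
  Matrix.of fun j i => if ((j : ℕ) : ℤ) < c i then 1 else 0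

theorem det_stairMatrix (c : Fin n → ℤ) :
    (stairMatrix c).det =
      ∑ σ : Perm (Fin n), (Perm.sign σ : ℤ) * if ∀ i, ((σ i : ℕ) : ℤ) < c i then 1 else 0 := by
  rw [Matrix.det_apply']
  refine sum_congr rfl fun σ _ => ?_
  simp only [stairMatrix, Matrix.of_apply, prod_boole, mem_univ, true_implies]
  push_cast
  rfl

theorem stairMatrix_min (c : Fin n → ℤ) : stairMatrix (fun i => min (c i) n) = stairMatrix c := by
  ext j i
  simp only [stairMatrix, Matrix.of_apply, lt_min_iff, Nat.cast_lt, j.isLt, and_true]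

theorem det_stairMatrix_eq_zero {c : Fin n → ℤ} {i i' : Fin n} (hne : i ≠ i')
    (hmin : min (c i) n = min (c i') n) : (stairMatrix c).det = 0 := by
  rw [← stairMatrix_min]
  exact Matrix.det_zero_of_column_eq hne fun j => by simp only [stairMatrix, Matrix.of_apply, hmin]

theorem det_stairMatrix_perm (σ : Perm (Fin n)) :
    (stairMatrix fun i => ((σ i : ℕ) : ℤ) + 1).det = Perm.sign σ := by
  have hperm : (stairMatrix fun i => ((σ i : ℕ) : ℤ) + 1) =
      (stairMatrix fun k : Fin n => ((k : ℕ) : ℤ) + 1).submatrix id σ := rfl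
  have htriangular : (stairMatrix fun k : Fin n => ((k : ℕ) : ℤ) + 1).det = 1 := by
    rw [Matrix.det_of_isUpperTriangular]
    · simp [stairMatrix]
    · intro k j hjk
      simp only [stairMatrix, Matrix.of_apply, Int.lt_add_one_iff, Nat.cast_le]
      exact if_neg (Fin.lt_def.mp hjk).not_ge
  rw [hperm, Matrix.det_permute', htriangular, mul_one]
  rfl

variable (p : ℕ)

variable (n) in
/-- The paper's `η = (1, 2, …, n - 1, n + p)`, with columns indexed from `0`. -/
def eta (j : Fin n) : ℤ := if (j : ℕ) + 1 = n then (n : ℤ) + (p : ℤ) else ((j : ℕ) : ℤ) + 1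

theorem min_eta (j : Fin n) : min (eta n p j) n = ((j : ℕ) : ℤ) + 1 := by
  have := j.isLt
  unfold eta
  split_ifs <;> omega

theorem eta_injective : Function.Injective (eta n p) := by
  intro j k hjk
  have := j.isLt
  have := k.isLt
  unfold eta at hjk
  apply Fin.ext
  split_ifs at hjk <;> omega

theorem det_stairMatrix_eta_comp (σ : Perm (Fin n)) :
    (stairMatrix fun i => eta n p (σ i)).det = Perm.sign σ := by
  rw [← stairMatrix_min]
  simp only [min_eta]
  exact det_stairMatrix_perm σ

theorem sum_eta (hn : 0 < n) : ∑ j, eta n p j = p + ∑ j : Fin n, (((j : ℕ) : ℤ) + 1) := by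
  let last : Fin n := ⟨n - 1, by omega⟩
  have heta : ∀ j, eta n p j = (((j : ℕ) : ℤ) + 1) + if j = last then (p : ℤ) else 0 := by
    intro j
    have := j.isLt
    have : (j : ℕ) + 1 = n ↔ j = last := by simp [last, Fin.ext_iff]; omega
    unfold eta
    split_ifs <;> simp_all
    omega
  simp only [heta, sum_add_distrib, sum_ite_eq', mem_univ, if_true]
  ring

theorem eq_eta_comp_of_min_eq {c : Fin n → ℤ} (τ : Perm (Fin n))
    (hmin : ∀ i, min (c i) n = ((τ i : ℕ) : ℤ) + 1)
    (hsum : ∑ i, c i = p + ∑ j : Fin n, (((j : ℕ) : ℤ) + 1)) :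
    c = fun i => eta n p (τ i) := by
  have hexcess : ∑ i, (c i - min (c i) n) = p := by
    simp only [hmin, sum_sub_distrib, hsum, Equiv.sum_comp τ (fun j : Fin n => ((j : ℕ) : ℤ) + 1)]
    ring
  funext i
  have := (τ i).isLt
  unfold eta
  split_ifs
  · have hothers : ∀ i' ≠ i, c i' - min (c i') n = 0 := by
      intro i' hi'
      have : (τ i' : ℕ) ≠ τ i := fun h => hi' (τ.injective (Fin.ext h))
      have := (τ i').isLt
      have := hmin i'
      omega
    rw [sum_eq_single i (fun i' _ hi' => hothers i' hi') (by simp)] at hexcess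
    have := hmin i
    omega
  · have := hmin i
    omega

theorem exists_perm_min_eq {c : Fin n → ℤ} (hc : ∀ i, 1 ≤ c i)
    (hinj : Function.Injective fun i => min (c i) n) :
    ∃ τ : Perm (Fin n), ∀ i, min (c i) n = ((τ i : ℕ) : ℤ) + 1 := by
  let τ : Fin n → Fin n := fun i =>
    ⟨(min (c i) n).toNat - 1, by have := hc i; have := i.isLt; omega⟩
  have hτ : ∀ i, min (c i) n = ((τ i : ℕ) : ℤ) + 1 := fun i => by
    have := hc i
    have := i.isLt
    simp only [τ]
    omega
  have hτinj : Function.Injective τ := fun i i' h => hinj <| by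
    simp only [hτ, h]
  exact ⟨Equiv.ofBijective τ (Finite.injective_iff_bijective.mp hτinj), hτ⟩

theorem det_stairMatrix_eq_zero_of_ne_eta_comp {c : Fin n → ℤ} (hc : ∀ i, 1 ≤ c i)
    (hsum : ∑ i, c i = p + ∑ j : Fin n, (((j : ℕ) : ℤ) + 1))
    (hne : ∀ σ : Perm (Fin n), c ≠ fun i => eta n p (σ i)) : (stairMatrix c).det = 0 := by
  by_cases hinj : Function.Injective fun i => min (c i) n
  · obtain ⟨τ, hτ⟩ := exists_perm_min_eq hc hinj
    exact absurd (eq_eta_comp_of_min_eq p τ hτ hsum) (hne τ)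
  · obtain ⟨i, i', hmin, hii'⟩ := Function.not_injective_iff.mp hinj
    exact det_stairMatrix_eq_zero hii' hmin

variable (n) in
noncomputable def exponents : Finset (Fin n → ℤ) :=
  {c ∈ Fintype.piFinset fun _ => Icc 1 ((n : ℤ) + p) |
    ∑ i, c i = p + ∑ j : Fin n, (((j : ℕ) : ℤ) + 1)}

theorem shift_mem_exponents (σ : Perm (Fin n)) {β : Fin n → ℕ}
    (hβ : β ∈ Nat.antidiagonalTuple n p) :
    (fun i => (β i : ℤ) + (((σ i : ℕ) : ℤ) + 1)) ∈ exponents n p := by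
  rw [Nat.mem_antidiagonalTuple] at hβ
  have hle : ∀ i, β i ≤ p := fun i => hβ ▸ single_le_sum (fun _ _ => Nat.zero_le _) (mem_univ i)
  refine mem_filter.mpr ⟨Fintype.mem_piFinset.mpr fun i => ?_, ?_⟩
  · have := hle i
    have := (σ i).isLt
    rw [mem_Icc]
    omega
  · rw [sum_add_distrib, Equiv.sum_comp σ (fun j : Fin n => ((j : ℕ) : ℤ) + 1), ← hβ]
    push_cast
    rfl

theorem eta_comp_mem_exponents (hn : 0 < n) (σ : Perm (Fin n)) :
    (fun i => eta n p (σ i)) ∈ exponents n p := by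
  refine mem_filter.mpr ⟨Fintype.mem_piFinset.mpr fun i => ?_, ?_⟩
  · have := (σ i).isLt
    rw [mem_Icc]
    unfold eta
    split_ifs <;> omega
  · rw [Equiv.sum_comp σ (eta n p), sum_eta p hn]

theorem sum_exponents_eq {c : Fin n → ℤ} (hc : c ∈ exponents n p) :
    ∑ i, c i = p + ∑ j : Fin n, (((j : ℕ) : ℤ) + 1) :=
  (mem_filter.mp hc).2

theorem one_le_of_mem_exponents {c : Fin n → ℤ} (hc : c ∈ exponents n p) (i : Fin n) : 1 ≤ c i :=
  (mem_Icc.mp (Fintype.mem_piFinset.mp (mem_filter.mp hc).1 i)).1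

variable {R : Type*} [Ring R]

def rowProd (g : ℤ → Fin n → R) (c : Fin n → ℤ) : R := (List.ofFn fun i => g (c i) i).prod

theorem sum_rowdet_shift_eq_sum_exponents (g : ℤ → Fin n → R) :
    ∑ β ∈ Nat.antidiagonalTuple n p,
        rowdet (Matrix.of fun i j : Fin n => g ((β i : ℤ) + (((j : ℕ) : ℤ) + 1)) i)
      = ∑ c ∈ exponents n p, (stairMatrix c).det • rowProd g c := by
  have hσ : ∀ σ : Perm (Fin n),
      ∑ β ∈ Nat.antidiagonalTuple n p, rowProd g (fun i => (β i : ℤ) + (((σ i : ℕ) : ℤ) + 1))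
        = ∑ c ∈ exponents n p, (if ∀ i, ((σ i : ℕ) : ℤ) < c i then 1 else 0 : ℤ) • rowProd g c := by
    intro σ
    rw [sum_antidiagonalTuple_add _ _ (fun β => shift_mem_exponents p σ) _ _, sum_filter]
    · simp only [Int.add_one_le_iff, ite_smul, one_smul, zero_smul]
    · intro c hc
      rw [sum_exponents_eq p hc, Equiv.sum_comp σ (fun j : Fin n => ((j : ℕ) : ℤ) + 1)]
  calc _ = ∑ σ : Perm (Fin n), (Perm.sign σ : ℤ) •
          ∑ c ∈ exponents n p, (if ∀ i, ((σ i : ℕ) : ℤ) < c i then 1 else 0 : ℤ) • rowProd g c := by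
        simp only [rowdet, Matrix.of_apply, ← hσ, smul_sum]
        exact sum_comm
    _ = _ := by
        simp only [smul_sum, smul_smul, det_stairMatrix, sum_smul]
        exact sum_comm

theorem rowdet_eta_eq_sum_exponents (hn : 0 < n) (g : ℤ → Fin n → R) :
    rowdet (Matrix.of fun i j : Fin n => g (eta n p j) i)
      = ∑ c ∈ exponents n p, (stairMatrix c).det • rowProd g c := by
  have hsupport : univ.image (fun (σ : Perm (Fin n)) i => eta n p (σ i)) ⊆ exponents n p :=
    image_subset_iff.mpr fun σ _ => eta_comp_mem_exponents p hn σ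
  have hzero : ∀ c ∈ exponents n p, c ∉ univ.image (fun (σ : Perm (Fin n)) i => eta n p (σ i)) →
      (stairMatrix c).det • rowProd g c = 0 := fun c hc hnot => by
    rw [det_stairMatrix_eq_zero_of_ne_eta_comp p (one_le_of_mem_exponents p hc)
      (sum_exponents_eq p hc) fun σ h => hnot (mem_image.mpr ⟨σ, mem_univ _, h.symm⟩), zero_smul]
  have hinj : Function.Injective fun (σ : Perm (Fin n)) i => eta n p (σ i) :=
    fun σ τ h => Equiv.ext fun i => eta_injective p (congrFun h i)
  rw [← sum_subset hsupport hzero, sum_image hinj.injOn]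
  simp only [det_stairMatrix_eta_comp]
  rfl

end PrePieri

/-- The first pre-Pieri rule. -/
theorem first_pre_pieri {R : Type*} [Ring R] (n : ℕ) (hn : 0 < n) (p : ℕ)
    (h : ℤ → Fin n → R) (α : Fin n → ℤ) :
    ∑ β ∈ Finset.Nat.antidiagonalTuple n p,
        rowdet (Matrix.of fun i j : Fin n => h (α i + (β i : ℤ) + (((j : ℕ) : ℤ) + 1)) i)
      = rowdet (Matrix.of fun i j : Fin n =>
          h (α i + (if (j : ℕ) + 1 = n then (n : ℤ) + (p : ℤ) else ((j : ℕ) : ℤ) + 1)) i) := by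
  let g : ℤ → Fin n → R := fun k i => h (α i + k) i
  simp only [add_assoc]
  exact (PrePieri.sum_rowdet_shift_eq_sum_exponents p g).trans
    (PrePieri.rowdet_eta_eq_sum_exponents p hn g).symm
end

section
/- Let R be a (possibly noncommutative) ring, n ∈ ℕ, and p ∈ {0,1,…,n}. Given elements h_{k,i} ∈ R for all k ∈ ℤ and i ∈ [n], define for each α ∈ ℤ^n the element t_α := rowdet((h_{α_i + j, i})_{i,j ∈ [n]}). Let ξ = (1, 2, …, n-p, n-p+2, n-p+3, …, n+1) ∈ ℤ^n (i.e., ξ_i = i for i ≤ n-p and ξ_i = i+1 for i > n-p). Then for any α ∈ ℤ^n, Σ_{β ∈ {0,1}^n, |β| = p} t_{α+β} = rowdet((h_{α_i + ξ_j, i})_{i,j ∈ [n]}). -/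
open Finset Equiv
open scoped Classical

def ppDesc {n : ℕ} (s : Finset (Fin n)) (σ : Equiv.Perm (Fin n)) (v : ℕ) : Prop :=
  (∃ i, (σ i : ℕ) = v ∧ i ∈ s) ∧ (∃ i, (σ i : ℕ) = v + 1 ∧ i ∉ s)

lemma ppFind_eq {P Q : ℕ → Prop} [DecidablePred P] [DecidablePred Q]
    (h : ∀ k, P k ↔ Q k) (hP : ∃ k, P k) (hQ : ∃ k, Q k) :
    Nat.find hP = Nat.find hQ :=
  le_antisymm (Nat.find_min' _ ((h _).mpr (Nat.find_spec hQ)))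
    (Nat.find_min' _ ((h _).mp (Nat.find_spec hP)))

noncomputable def ppV {n : ℕ} (s : Finset (Fin n)) (σ : Equiv.Perm (Fin n))
    (hd : ∃ v, ppDesc s σ v) : ℕ := Nat.find hd

lemma ppV_spec {n : ℕ} (s : Finset (Fin n)) (σ : Equiv.Perm (Fin n))
    (hd : ∃ v, ppDesc s σ v) : ppDesc s σ (ppV s σ hd) := Nat.find_spec hd

lemma ppV_lt {n : ℕ} (s : Finset (Fin n)) (σ : Equiv.Perm (Fin n))
    (hd : ∃ v, ppDesc s σ v) : ppV s σ hd + 1 < n := by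
  obtain ⟨-, i, hi, -⟩ := ppV_spec s σ hd
  exact hi ▸ (σ i).isLt

noncomputable def ppFv {n : ℕ} (s : Finset (Fin n)) (σ : Equiv.Perm (Fin n))
    (hd : ∃ v, ppDesc s σ v) : Fin n := ⟨ppV s σ hd, by have := ppV_lt s σ hd; omega⟩

noncomputable def ppFw {n : ℕ} (s : Finset (Fin n)) (σ : Equiv.Perm (Fin n))
    (hd : ∃ v, ppDesc s σ v) : Fin n := ⟨ppV s σ hd + 1, ppV_lt s σ hd⟩

noncomputable def ppIv {n : ℕ} (s : Finset (Fin n)) (σ : Equiv.Perm (Fin n))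
    (hd : ∃ v, ppDesc s σ v) : Fin n := σ.symm (ppFv s σ hd)

noncomputable def ppIw {n : ℕ} (s : Finset (Fin n)) (σ : Equiv.Perm (Fin n))
    (hd : ∃ v, ppDesc s σ v) : Fin n := σ.symm (ppFw s σ hd)

lemma ppFv_ne_ppFw {n : ℕ} (s : Finset (Fin n)) (σ : Equiv.Perm (Fin n))
    (hd : ∃ v, ppDesc s σ v) : ppFv s σ hd ≠ ppFw s σ hd := by
  simp [ppFv, ppFw, Fin.ext_iff]

lemma ppIv_ne_ppIw {n : ℕ} (s : Finset (Fin n)) (σ : Equiv.Perm (Fin n))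
    (hd : ∃ v, ppDesc s σ v) : ppIv s σ hd ≠ ppIw s σ hd :=
  fun he => ppFv_ne_ppFw s σ hd (σ.symm.injective he)

lemma ppIv_mem {n : ℕ} (s : Finset (Fin n)) (σ : Equiv.Perm (Fin n))
    (hd : ∃ v, ppDesc s σ v) : ppIv s σ hd ∈ s := by
  obtain ⟨⟨i, hi, his⟩, -⟩ := ppV_spec s σ hd
  have : σ i = ppFv s σ hd := Fin.ext hi
  have : i = ppIv s σ hd := by rw [ppIv, ← this, Equiv.symm_apply_apply]
  rwa [← this]

lemma ppIw_not_mem {n : ℕ} (s : Finset (Fin n)) (σ : Equiv.Perm (Fin n))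
    (hd : ∃ v, ppDesc s σ v) : ppIw s σ hd ∉ s := by
  obtain ⟨-, ⟨i, hi, his⟩⟩ := ppV_spec s σ hd
  have : σ i = ppFw s σ hd := Fin.ext hi
  have : i = ppIw s σ hd := by rw [ppIw, ← this, Equiv.symm_apply_apply]
  rwa [← this]

noncomputable def ppFlip {n : ℕ} (s : Finset (Fin n)) (σ : Equiv.Perm (Fin n))
    (hd : ∃ v, ppDesc s σ v) : Finset (Fin n) × Equiv.Perm (Fin n) :=
  (insert (ppIw s σ hd) (s.erase (ppIv s σ hd)),
   Equiv.swap (ppFv s σ hd) (ppFw s σ hd) * σ)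

lemma ppFlip_snd_apply {n : ℕ} (s : Finset (Fin n)) (σ : Equiv.Perm (Fin n))
    (hd : ∃ v, ppDesc s σ v) (i : Fin n) :
    (ppFlip s σ hd).2 i = σ (Equiv.swap (ppIv s σ hd) (ppIw s σ hd) i) := by
  rcases eq_or_ne i (ppIv s σ hd) with rfl | hiv
  · simp [ppFlip, ppIv, ppIw, Equiv.swap_apply_left]
  rcases eq_or_ne i (ppIw s σ hd) with rfl | hiw
  · simp [ppFlip, ppIv, ppIw, Equiv.swap_apply_right]
  · have h1 : σ i ≠ ppFv s σ hd := fun he => hiv (by rw [ppIv, ← he, Equiv.symm_apply_apply])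
    have h2 : σ i ≠ ppFw s σ hd := fun he => hiw (by rw [ppIw, ← he, Equiv.symm_apply_apply])
    simp [ppFlip, Equiv.swap_apply_of_ne_of_ne hiv hiw, Equiv.swap_apply_of_ne_of_ne h1 h2]

lemma ppFlip_fst_mem {n : ℕ} (s : Finset (Fin n)) (σ : Equiv.Perm (Fin n))
    (hd : ∃ v, ppDesc s σ v) (i : Fin n) :
    (i ∈ (ppFlip s σ hd).1 ↔ Equiv.swap (ppIv s σ hd) (ppIw s σ hd) i ∈ s) := by
  rcases eq_or_ne i (ppIv s σ hd) with rfl | hiv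
  · simp only [ppFlip, Equiv.swap_apply_left, Finset.mem_insert, Finset.mem_erase]
    simp [ppIv_ne_ppIw s σ hd, ppIw_not_mem s σ hd]
  rcases eq_or_ne i (ppIw s σ hd) with rfl | hiw
  · simp only [ppFlip, Equiv.swap_apply_right, Finset.mem_insert]
    simp [ppIv_mem s σ hd]
  · simp only [ppFlip, Equiv.swap_apply_of_ne_of_ne hiv hiw, Finset.mem_insert,
      Finset.mem_erase]
    simp [hiv, hiw]

lemma ppFlip_desc_iff {n : ℕ} (s : Finset (Fin n)) (σ : Equiv.Perm (Fin n))
    (hd : ∃ v, ppDesc s σ v) (k : ℕ) :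
    ppDesc (ppFlip s σ hd).1 (ppFlip s σ hd).2 k ↔ ppDesc s σ k := by
  have hτ : ∀ i : Fin n, Equiv.swap (ppIv s σ hd) (ppIw s σ hd)
      (Equiv.swap (ppIv s σ hd) (ppIw s σ hd) i) = i := fun i => Equiv.swap_apply_self _ _ i
  constructor
  · rintro ⟨⟨i, hi, his⟩, ⟨j, hj, hjs⟩⟩
    rw [ppFlip_snd_apply] at hi hj
    rw [ppFlip_fst_mem] at his hjs
    exact ⟨⟨_, hi, his⟩, ⟨_, hj, hjs⟩⟩
  · rintro ⟨⟨i, hi, his⟩, ⟨j, hj, hjs⟩⟩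
    refine ⟨⟨Equiv.swap (ppIv s σ hd) (ppIw s σ hd) i, ?_, ?_⟩,
      ⟨Equiv.swap (ppIv s σ hd) (ppIw s σ hd) j, ?_, ?_⟩⟩
    · rw [ppFlip_snd_apply, hτ]; exact hi
    · rw [ppFlip_fst_mem, hτ]; exact his
    · rw [ppFlip_snd_apply, hτ]; exact hj
    · rw [ppFlip_fst_mem, hτ]; exact hjs

lemma ppFlip_desc_exists {n : ℕ} (s : Finset (Fin n)) (σ : Equiv.Perm (Fin n))
    (hd : ∃ v, ppDesc s σ v) :
    ∃ v, ppDesc (ppFlip s σ hd).1 (ppFlip s σ hd).2 v :=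
  ⟨ppV s σ hd, (ppFlip_desc_iff s σ hd _).mpr (ppV_spec s σ hd)⟩

lemma ppFlip_ppV {n : ℕ} (s : Finset (Fin n)) (σ : Equiv.Perm (Fin n))
    (hd : ∃ v, ppDesc s σ v) (hd' : ∃ v, ppDesc (ppFlip s σ hd).1 (ppFlip s σ hd).2 v) :
    ppV (ppFlip s σ hd).1 (ppFlip s σ hd).2 hd' = ppV s σ hd :=
  ppFind_eq (ppFlip_desc_iff s σ hd) hd' hd

lemma ppFlip_involutive {n : ℕ} (s : Finset (Fin n)) (σ : Equiv.Perm (Fin n))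
    (hd : ∃ v, ppDesc s σ v) (hd' : ∃ v, ppDesc (ppFlip s σ hd).1 (ppFlip s σ hd).2 v) :
    ppFlip (ppFlip s σ hd).1 (ppFlip s σ hd).2 hd' = (s, σ) := by
  have hV := ppFlip_ppV s σ hd hd'
  have hfv : ppFv (ppFlip s σ hd).1 (ppFlip s σ hd).2 hd' = ppFv s σ hd := Fin.ext (by simp [ppFv, hV])
  have hfw : ppFw (ppFlip s σ hd).1 (ppFlip s σ hd).2 hd' = ppFw s σ hd := Fin.ext (by simp [ppFw, hV])
  have hsnd : (ppFlip s σ hd).2 = Equiv.swap (ppFv s σ hd) (ppFw s σ hd) * σ := rfl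
  have hiv' : ppIv (ppFlip s σ hd).1 (ppFlip s σ hd).2 hd' = ppIw s σ hd := by
    rw [ppIv, hfv, hsnd, Equiv.Perm.mul_def, Equiv.symm_trans_apply]
    rw [Equiv.symm_swap, Equiv.swap_apply_left]
    rfl
  have hiw' : ppIw (ppFlip s σ hd).1 (ppFlip s σ hd).2 hd' = ppIv s σ hd := by
    rw [ppIw, hfw, hsnd, Equiv.Perm.mul_def, Equiv.symm_trans_apply]
    rw [Equiv.symm_swap, Equiv.swap_apply_right]
    rfl
  have hsnd2 : Equiv.swap (ppFv s σ hd) (ppFw s σ hd) * (ppFlip s σ hd).2 = σ := by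
    rw [hsnd, ← mul_assoc, Equiv.swap_mul_self, one_mul]
  have h1 : (ppFlip s σ hd).1 = insert (ppIw s σ hd) (s.erase (ppIv s σ hd)) := rfl
  conv_lhs => rw [ppFlip]
  rw [hiv', hiw', hfv, hfw, Prod.mk.injEq]
  constructor
  · rw [h1, Finset.erase_insert (by simp [ppIw_not_mem s σ hd]),
      Finset.insert_erase (ppIv_mem s σ hd)]
  · exact hsnd2

lemma ppCard_filter (n p : ℕ) (hp : p ≤ n) (σ : Equiv.Perm (Fin n)) :
    (Finset.univ.filter fun i : Fin n => n - p ≤ ((σ i : ℕ))).card = p := by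
  classical
  have h1 : (Finset.univ.filter fun i : Fin n => n - p ≤ ((σ i : ℕ))) =
      Finset.image σ.symm (Finset.univ.filter fun v : Fin n => n - p ≤ (v : ℕ)) := by
    ext i
    simp only [Finset.mem_filter, Finset.mem_image, Finset.mem_univ, true_and]
    constructor
    · intro hi; exact ⟨σ i, hi, by simp⟩
    · rintro ⟨v, hv, rfl⟩; simpa using hv
  rw [h1, Finset.card_image_of_injective _ σ.symm.injective,
    ← Finset.card_image_of_injective _ Fin.val_injective]
  have h2 : Finset.image Fin.val (Finset.univ.filter fun v : Fin n => n - p ≤ (v : ℕ)) =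
      (Finset.range n).filter fun v => n - p ≤ v := by
    ext v
    simp [Fin.exists_iff, and_comm]
  rw [h2]
  have h3 : (Finset.range n).filter (fun v => n - p ≤ v) = Finset.Ico (n - p) n := by
    ext v; simp [Finset.mem_Ico, and_comm]
  rw [h3, Nat.card_Ico]; omega

lemma ppDesc_chain {n : ℕ} (s : Finset (Fin n)) (σ : Equiv.Perm (Fin n)) :
    ∀ d v, (∃ i, (σ i : ℕ) = v ∧ i ∈ s) → (∀ i : Fin n, (σ i : ℕ) = v + d + 1 → i ∉ s) →
      v + d + 1 < n → ∃ u, ppDesc s σ u := by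
  intro d
  induction d with
  | zero =>
    intro v hv hw hlt
    exact ⟨v, hv, σ.symm ⟨v + 1, by omega⟩, by simp, hw _ (by simp)⟩
  | succ d ih =>
    intro v hv hw hlt
    by_cases hr : ∃ i, (σ i : ℕ) = v + 1 ∧ i ∈ s
    · exact ih (v + 1) hr (fun i hi => hw i (by omega)) (by omega)
    · refine ⟨v, hv, σ.symm ⟨v + 1, by omega⟩, by simp, fun hmem => hr ⟨_, by simp, hmem⟩⟩

lemma ppDesc_exists {n p : ℕ} (hp : p ≤ n) (s : Finset (Fin n)) (σ : Equiv.Perm (Fin n))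
    (hs : s.card = p) (hbad : ¬ ∀ i, (i ∈ s ↔ n - p ≤ (σ i : ℕ))) :
    ∃ v, ppDesc s σ v := by
  classical
  set A := Finset.univ.filter (fun i : Fin n => n - p ≤ (σ i : ℕ)) with hA
  have hcardA : A.card = p := ppCard_filter n p hp σ
  have hne : s ≠ A := by
    intro he
    exact hbad fun i => by rw [he, hA]; simp
  have h1 : ∃ i₁, i₁ ∈ s ∧ (σ i₁ : ℕ) < n - p := by
    by_contra hc
    push_neg at hc
    have hsub : s ⊆ A := fun i hi => by
      simp only [hA, Finset.mem_filter, Finset.mem_univ, true_and]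
      exact le_of_not_gt (fun hlt => absurd hlt (not_lt.mpr (hc i hi)))
    exact hne (Finset.eq_of_subset_of_card_le hsub (by omega))
  have h2 : ∃ i₂, i₂ ∉ s ∧ n - p ≤ (σ i₂ : ℕ) := by
    by_contra hc
    push_neg at hc
    have hsub : A ⊆ s := fun i hi => by
      simp only [hA, Finset.mem_filter, Finset.mem_univ, true_and] at hi
      by_contra hns
      exact absurd hi (not_le.mpr (hc i hns))
    exact hne (Finset.eq_of_subset_of_card_le hsub (by omega)).symm
  obtain ⟨i₁, hi₁s, hi₁⟩ := h1
  obtain ⟨i₂, hi₂s, hi₂⟩ := h2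
  have hlt : (σ i₁ : ℕ) < (σ i₂ : ℕ) := by omega
  refine ppDesc_chain s σ ((σ i₂ : ℕ) - (σ i₁ : ℕ) - 1) (σ i₁ : ℕ) ⟨i₁, rfl, hi₁s⟩
    (fun i hi => ?_) (by have := (σ i₂).isLt; omega)
  have : (σ i : ℕ) = (σ i₂ : ℕ) := by omega
  have : σ i = σ i₂ := Fin.val_injective this
  rwa [σ.injective this]

lemma ppFlip_arg {n : ℕ} (s : Finset (Fin n)) (σ : Equiv.Perm (Fin n))
    (hd : ∃ v, ppDesc s σ v) (α : Fin n → ℤ) (i : Fin n) :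
    α i + (if i ∈ (ppFlip s σ hd).1 then (1 : ℤ) else 0) + ((((ppFlip s σ hd).2 i : ℕ) : ℤ) + 1)
      = α i + (if i ∈ s then (1 : ℤ) else 0) + (((σ i : ℕ) : ℤ) + 1) := by
  have hvw : σ (ppIw s σ hd) = ppFw s σ hd := Equiv.apply_symm_apply _ _
  have hvv : σ (ppIv s σ hd) = ppFv s σ hd := Equiv.apply_symm_apply _ _
  rcases eq_or_ne i (ppIv s σ hd) with rfl | hiv
  · rw [ppFlip_snd_apply, Equiv.swap_apply_left, hvw, hvv,
      if_neg (by rw [ppFlip_fst_mem, Equiv.swap_apply_left]; exact ppIw_not_mem s σ hd),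
      if_pos (ppIv_mem s σ hd)]
    show _ + _ + ((((ppV s σ hd + 1 : ℕ) : ℤ)) + 1) = _ + _ + (((ppV s σ hd : ℕ) : ℤ) + 1)
    push_cast
    ring
  rcases eq_or_ne i (ppIw s σ hd) with rfl | hiw
  · rw [ppFlip_snd_apply, Equiv.swap_apply_right, hvw, hvv,
      if_pos (by rw [ppFlip_fst_mem, Equiv.swap_apply_right]; exact ppIv_mem s σ hd),
      if_neg (ppIw_not_mem s σ hd)]
    show _ + _ + ((((ppV s σ hd : ℕ) : ℤ)) + 1) = _ + _ + (((ppV s σ hd + 1 : ℕ) : ℤ) + 1)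
    push_cast
    ring
  · have hmem : i ∈ (ppFlip s σ hd).1 ↔ i ∈ s := by
      rw [ppFlip_fst_mem, Equiv.swap_apply_of_ne_of_ne hiv hiw]
    rw [ppFlip_snd_apply, Equiv.swap_apply_of_ne_of_ne hiv hiw]
    simp only [hmem]

/-- The second pre-Pieri rule.  The n-tuples β ∈ {0,1}^n with |β| = p are encoded by the
subsets s of [n] of cardinality p, via β_i = [i ∈ s]. -/
theorem second_pre_pieri {R : Type*} [Ring R] (n : ℕ) (p : ℕ) (hp : p ≤ n)
    (h : ℤ → Fin n → R) (α : Fin n → ℤ) :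
    ∑ s ∈ Finset.powersetCard p (Finset.univ : Finset (Fin n)),
        rowdet (Matrix.of fun i j : Fin n =>
          h (α i + (if i ∈ s then 1 else 0) + (((j : ℕ) : ℤ) + 1)) i)
      = rowdet (Matrix.of fun i j : Fin n =>
          h (α i + (if (j : ℕ) + 1 ≤ n - p then ((j : ℕ) : ℤ) + 1 else ((j : ℕ) : ℤ) + 2)) i) := by
  classical
  simp only [rowdet, Matrix.of_apply]
  rw [← Finset.sum_product']
  set F : Finset (Fin n) × Equiv.Perm (Fin n) → R := fun x =>
    (Equiv.Perm.sign x.2 : ℤ) •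
      (List.ofFn fun i => h (α i + (if i ∈ x.1 then 1 else 0) + (((x.2 i : ℕ) : ℤ) + 1)) i).prod
    with hF
  show ∑ x ∈ (Finset.powersetCard p Finset.univ) ×ˢ Finset.univ, F x = _
  set Good : Finset (Fin n) × Equiv.Perm (Fin n) → Prop :=
    fun x => ∀ i, (i ∈ x.1 ↔ n - p ≤ (x.2 i : ℕ)) with hGood
  rw [← Finset.sum_filter_add_sum_filter_not
    ((Finset.powersetCard p Finset.univ) ×ˢ Finset.univ) Good F]
  have hd_of : ∀ x : Finset (Fin n) × Equiv.Perm (Fin n),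
      x ∈ ((Finset.powersetCard p Finset.univ) ×ˢ Finset.univ).filter (fun x => ¬ Good x) →
      ∃ v, ppDesc x.1 x.2 v := by
    intro x hx
    rw [Finset.mem_filter, Finset.mem_product, Finset.mem_powersetCard_univ] at hx
    exact ppDesc_exists hp x.1 x.2 hx.1.1 hx.2
  have hbad : ∑ x ∈ ((Finset.powersetCard p Finset.univ) ×ˢ Finset.univ).filter
      (fun x => ¬ Good x), F x = 0 := by
    apply Finset.sum_involution (fun x hx => ppFlip x.1 x.2 (hd_of x hx))
    · -- f a + f (g a) = 0
      intro x hx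
      have hd := hd_of x hx
      have hsign : (Equiv.Perm.sign (ppFlip x.1 x.2 hd).2 : ℤ)
          = -(Equiv.Perm.sign x.2 : ℤ) := by
        have : (ppFlip x.1 x.2 hd).2 = Equiv.swap (ppFv x.1 x.2 hd) (ppFw x.1 x.2 hd) * x.2 := rfl
        rw [this, Equiv.Perm.sign_mul, Equiv.Perm.sign_swap (ppFv_ne_ppFw x.1 x.2 hd)]
        push_cast
        ring
      have hprod : (List.ofFn fun i =>
            h (α i + (if i ∈ (ppFlip x.1 x.2 hd).1 then 1 else 0)
              + ((((ppFlip x.1 x.2 hd).2 i : ℕ) : ℤ) + 1)) i).prod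
          = (List.ofFn fun i =>
            h (α i + (if i ∈ x.1 then 1 else 0) + (((x.2 i : ℕ) : ℤ) + 1)) i).prod := by
        refine congrArg List.prod (congrArg List.ofFn (funext fun i => ?_))
        exact congrArg (fun z => h z i) (ppFlip_arg x.1 x.2 hd α i)
      show F x + F (ppFlip x.1 x.2 hd) = 0
      rw [hF]
      simp only
      rw [hprod, hsign, neg_smul, add_neg_cancel]
    · -- g a ≠ a
      intro x hx _
      have hd := hd_of x hx
      intro he
      have h2 : (ppFlip x.1 x.2 hd).2 (ppIv x.1 x.2 hd) = x.2 (ppIv x.1 x.2 hd) := by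
        rw [he]
      rw [ppFlip_snd_apply, Equiv.swap_apply_left] at h2
      exact ppIv_ne_ppIw x.1 x.2 hd (x.2.injective h2).symm
    · -- involutive
      intro x hx
      exact ppFlip_involutive x.1 x.2 (hd_of x hx) _
    · -- g a ∈ s
      intro x hx
      have hd := hd_of x hx
      rw [Finset.mem_filter, Finset.mem_product, Finset.mem_powersetCard_univ] at hx ⊢
      refine ⟨⟨?_, Finset.mem_univ _⟩, ?_⟩
      · -- card
        have h1 : (ppFlip x.1 x.2 hd).1
            = insert (ppIw x.1 x.2 hd) (x.1.erase (ppIv x.1 x.2 hd)) := rfl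
        rw [h1, Finset.card_insert_of_notMem (by simp [ppIw_not_mem x.1 x.2 hd]),
          Finset.card_erase_of_mem (ppIv_mem x.1 x.2 hd)]
        have hpos : 0 < x.1.card := Finset.card_pos.mpr ⟨_, ppIv_mem x.1 x.2 hd⟩
        omega
      · -- not good
        intro hg
        have h1 : ppIw x.1 x.2 hd ∈ (ppFlip x.1 x.2 hd).1 := by
          rw [ppFlip_fst_mem, Equiv.swap_apply_right]
          exact ppIv_mem x.1 x.2 hd
        have h2 : ppIv x.1 x.2 hd ∉ (ppFlip x.1 x.2 hd).1 := by
          rw [ppFlip_fst_mem, Equiv.swap_apply_left]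
          exact ppIw_not_mem x.1 x.2 hd
        have e1 := (hg (ppIw x.1 x.2 hd)).mp h1
        have e2 : ¬ (n - p ≤ (((ppFlip x.1 x.2 hd).2 (ppIv x.1 x.2 hd) : ℕ))) :=
          fun hh => h2 ((hg (ppIv x.1 x.2 hd)).mpr hh)
        simp only [ppFlip_snd_apply, Equiv.swap_apply_right, Equiv.swap_apply_left,
          ppIv, ppIw, Equiv.apply_symm_apply, ppFv, ppFw] at e1 e2
        omega
  rw [hbad, add_zero]
  apply Finset.sum_bij' (fun x _ => x.2)
    (fun (σ : Equiv.Perm (Fin n)) _ =>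
      ((Finset.univ.filter fun i => n - p ≤ (σ i : ℕ)), σ))
  · intro x hx
    exact Finset.mem_univ _
  · intro σ _
    rw [Finset.mem_filter, Finset.mem_product, Finset.mem_powersetCard_univ]
    exact ⟨⟨ppCard_filter n p hp σ, Finset.mem_univ _⟩, fun i => by simp⟩
  · intro x hx
    rw [Finset.mem_filter] at hx
    have hg := hx.2
    apply Prod.ext
    · ext i
      rw [Finset.mem_filter]
      simpa using (hg i).symm
    · rfl
  · intro σ _
    rfl
  · intro x hx
    rw [Finset.mem_filter] at hx
    have hg := hx.2
    rw [hF]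
    simp only
    refine congrArg (HSMul.hSMul _) (congrArg List.prod (congrArg List.ofFn (funext fun i => ?_)))
    refine congrArg (fun z => h z i) ?_
    by_cases hmem : i ∈ x.1
    · have hle : n - p ≤ (x.2 i : ℕ) := (hg i).mp hmem
      rw [if_pos hmem, if_neg (by omega)]
      push_cast
      ring
    · have hlt : (x.2 i : ℕ) < n - p := by
        by_contra hc
        exact hmem ((hg i).mpr (le_of_not_gt hc))
      rw [if_neg hmem, if_pos (by omega)]
      push_cast
      ring
end

section
/- Let n be a positive integer and p a nonnegative integer. Let η = (1, 2, …, n-1, n+p) ∈ ℤ^n. Let ν ∈ ℤ^n be an n-tuple with |ν| = |η|. Then det(([ν_i ≥ j])_{i,j ∈ [n]}) = Σ_{σ ∈ S_n, ν = η∘σ} (-1)^σ, where [P] is the Iverson bracket (1 if P is true, 0 otherwise), the determinant is over ℤ, and η∘σ := (η_{σ(1)}, …, η_{σ(n)}). -/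
/-!
Row `i` of the matrix `([ν i ≥ j])` depends only on `ν i` clipped to `[0, n]`, so the determinant
vanishes unless the clipped values are `σ 0 + 1, …, σ (n-1) + 1` for a permutation `σ`. Then `ν`
agrees with `η ∘ σ` except possibly at the entry sent to `n`, and `|ν| = |η|` pins that entry
down to `n + p`. Finally the matrix of `η` is lower unitriangular, and `ν = η ∘ σ` permutes its rows.
-/

open Finset Function Equiv

theorem Fintype.apply_eq_of_sum_eq_of_forall_ne {ι M : Type*} [Fintype ι] [DecidableEq ι]
    [AddCommMonoid M] [IsCancelAdd M] {f g : ι → M} (hsum : ∑ i, f i = ∑ i, g i) {i₀ : ι}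
    (h : ∀ i ≠ i₀, f i = g i) : f i₀ = g i₀ := by
  rw [← add_sum_erase _ _ (mem_univ i₀), ← add_sum_erase _ g (mem_univ i₀),
    Finset.sum_congr rfl fun i hi => h i (ne_of_mem_erase hi)] at hsum
  exact add_right_cancel hsum

namespace ThresholdMatrix

variable {n : ℕ}

def thresholdMatrix (ν : Fin n → ℤ) : Matrix (Fin n) (Fin n) ℤ :=
  Matrix.of fun i j => if ((j : ℕ) : ℤ) + 1 ≤ ν i then 1 else 0

theorem thresholdMatrix_comp_perm (ν : Fin n → ℤ) (σ : Perm (Fin n)) :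
    thresholdMatrix (ν ∘ σ) = (thresholdMatrix ν).submatrix σ id :=
  rfl

theorem det_thresholdMatrix_comp_perm (ν : Fin n → ℤ) (σ : Perm (Fin n)) :
    (thresholdMatrix (ν ∘ σ)).det = Perm.sign σ * (thresholdMatrix ν).det := by
  rw [thresholdMatrix_comp_perm, Matrix.det_permute, Int.cast_id]

theorem det_thresholdMatrix_eq_one {η : Fin n → ℤ} (h_diag : ∀ i : Fin n, (i : ℤ) + 1 ≤ η i)
    (h_upper : ∀ i j : Fin n, i < j → η i ≤ j) : (thresholdMatrix η).det = 1 := by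
  have h_tri : (thresholdMatrix η).BlockTriangular OrderDual.toDual := by
    intro i j hij
    have := h_upper i j hij
    simp only [thresholdMatrix, Matrix.of_apply, ite_eq_right_iff]
    omega
  rw [Matrix.det_of_isLowerTriangular _ h_tri]
  exact prod_eq_one fun i _ => if_pos (h_diag i)

theorem det_thresholdMatrix_eq_zero_of_nonpos {ν : Fin n → ℤ} {i : Fin n} (hi : ν i ≤ 0) :
    (thresholdMatrix ν).det = 0 :=
  Matrix.det_eq_zero_of_row_eq_zero i fun j => if_neg (by omega)

theorem thresholdMatrix_row_eq {ν : Fin n → ℤ} {i i' : Fin n}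
    (h : min (ν i).toNat n = min (ν i').toNat n) : thresholdMatrix ν i = thresholdMatrix ν i' := by
  funext j
  have := j.isLt
  simp only [thresholdMatrix, Matrix.of_apply]
  congr 1
  apply propext
  omega

theorem exists_perm_min_toNat_eq_of_det_ne_zero {ν : Fin n → ℤ}
    (hdet : (thresholdMatrix ν).det ≠ 0) :
    ∃ σ : Perm (Fin n), ∀ i, min (ν i).toNat n = (σ i : ℕ) + 1 := by
  have hpos : ∀ i, 1 ≤ ν i := fun i => by
    by_contra! h
    exact hdet (det_thresholdMatrix_eq_zero_of_nonpos (i := i) (by omega))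
  let f : Fin n → Fin n := fun i => ⟨min (ν i).toNat n - 1, by have := i.pos; omega⟩
  have hf : Injective f := by
    intro i i' h
    by_contra hne
    have := hpos i
    have := hpos i'
    simp only [f, Fin.ext_iff] at h
    exact hdet (Matrix.det_zero_of_row_eq hne (thresholdMatrix_row_eq (by omega)))
  refine ⟨Equiv.ofBijective f hf.bijective_of_finite, fun i => ?_⟩
  have := hpos i
  have := i.pos
  simp only [Equiv.ofBijective_apply, f]
  omega

theorem filter_comp_perm_eq_singleton {ν η : Fin n → ℤ} (hη : Injective η) {σ : Perm (Fin n)}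
    (hσ : ∀ i, ν i = η (σ i)) :
    univ.filter (fun τ : Perm (Fin n) => ∀ i, ν i = η (τ i)) = {σ} := by
  ext τ
  simp only [mem_filter, mem_univ, true_and, mem_singleton]
  refine ⟨fun hτ => Equiv.ext fun i => hη ((hτ i).symm.trans (hσ i)), ?_⟩
  rintro rfl
  exact hσ

def staircase (n p : ℕ) (j : Fin n) : ℤ :=
  if (j : ℕ) + 1 = n then (n : ℤ) + (p : ℤ) else ((j : ℕ) : ℤ) + 1

theorem staircase_diag (p : ℕ) (i : Fin n) : (i : ℤ) + 1 ≤ staircase n p i := by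
  unfold staircase
  split <;> omega

theorem staircase_le_of_lt (p : ℕ) {i j : Fin n} (hij : i < j) : staircase n p i ≤ j := by
  have : (i : ℕ) < j := hij
  rw [staircase, if_neg (by omega)]
  omega

theorem staircase_strictMono (p : ℕ) : StrictMono (staircase n p) := fun i j hij =>
  (staircase_le_of_lt p hij).trans_lt (by have := staircase_diag p j; omega)

theorem det_thresholdMatrix_staircase (p : ℕ) : (thresholdMatrix (staircase n p)).det = 1 :=
  det_thresholdMatrix_eq_one (staircase_diag p) fun _ _ => staircase_le_of_lt p

theorem eq_staircase_comp_of_min_toNat_eq {p : ℕ} {ν : Fin n → ℤ}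
    (hsum : ∑ i, ν i = ∑ i, staircase n p i) {σ : Perm (Fin n)}
    (hσ : ∀ i, min (ν i).toNat n = (σ i : ℕ) + 1) : ∀ i, ν i = staircase n p (σ i) := by
  have h_below : ∀ i, (σ i : ℕ) + 1 ≠ n → ν i = staircase n p (σ i) := fun i hi => by
    have := hσ i
    rw [staircase, if_neg hi]
    omega
  intro i
  by_cases hi : (σ i : ℕ) + 1 = n
  · refine Fintype.apply_eq_of_sum_eq_of_forall_ne (f := ν) (g := staircase n p ∘ σ)
      (hsum.trans (Equiv.sum_comp σ _).symm) fun i' hi' => h_below i' fun hi'' => hi' ?_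
    exact σ.injective (Fin.ext (by omega))
  · exact h_below i hi

end ThresholdMatrix

open ThresholdMatrix in
theorem nu_det_general (n : ℕ) (p : ℕ) (η : Fin n → ℤ)
    (hη : ∀ j : Fin n, η j = if (j : ℕ) + 1 = n then (n : ℤ) + (p : ℤ) else ((j : ℕ) : ℤ) + 1)
    (ν : Fin n → ℤ) (hsum : ∑ i, ν i = ∑ i, η i) :
    Matrix.det (Matrix.of fun i j : Fin n => if ((j : ℕ) : ℤ) + 1 ≤ ν i then (1 : ℤ) else 0)
      = ∑ σ ∈ Finset.univ.filter (fun σ : Equiv.Perm (Fin n) => ∀ i, ν i = η (σ i)),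
          (Equiv.Perm.sign σ : ℤ) := by
  obtain rfl : η = staircase n p := funext hη
  change (thresholdMatrix ν).det = _
  by_cases h : ∃ σ : Perm (Fin n), ∀ i, ν i = staircase n p (σ i)
  · obtain ⟨σ, hσ⟩ := h
    rw [filter_comp_perm_eq_singleton (staircase_strictMono p).injective hσ, sum_singleton,
      show ν = staircase n p ∘ σ from funext hσ, det_thresholdMatrix_comp_perm,
      det_thresholdMatrix_staircase, mul_one]
  · rw [filter_false_of_mem fun σ _ hσ => h ⟨σ, hσ⟩, sum_empty]
    by_contra hdet
    obtain ⟨σ, hσ⟩ := exists_perm_min_toNat_eq_of_det_ne_zero hdet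
    exact h ⟨σ, eq_staircase_comp_of_min_toNat_eq hsum hσ⟩

/-- Lemma on the integer determinant of the matrix ([ν_i ≥ j]):
if η = (1, 2, …, n-1, n+p) and |ν| = |η|, then
det(([ν_i ≥ j])) = Σ_{σ : ν = η∘σ} (-1)^σ. -/
theorem nu_det (n : ℕ) (hn : 0 < n) (p : ℕ) (η : Fin n → ℤ)
    (hη : ∀ j : Fin n, η j = if (j : ℕ) + 1 = n then (n : ℤ) + (p : ℤ) else ((j : ℕ) : ℤ) + 1)
    (ν : Fin n → ℤ) (hsum : ∑ i, ν i = ∑ i, η i) :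
    Matrix.det (Matrix.of fun i j : Fin n => if ((j : ℕ) : ℤ) + 1 ≤ ν i then (1 : ℤ) else 0)
      = ∑ σ ∈ Finset.univ.filter (fun σ : Equiv.Perm (Fin n) => ∀ i, ν i = η (σ i)),
          (Equiv.Perm.sign σ : ℤ) :=
  nu_det_general n p η hη ν hsum
end

section
/- Let n ∈ ℕ and p ∈ {0,1,…,n}. Let ξ ∈ ℤ^n be defined by ξ_i = i for 1 ≤ i ≤ n-p and ξ_i = i+1 for n-p+1 ≤ i ≤ n. Let σ ∈ S_n be a permutation with σ ≠ id. Then the product ∏_{i=1}^n [ξ_i ⊵ σ(i)] equals 0, where u ⊵ v means u - v ∈ {0,1} and [P] is the Iverson bracket. -/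
/-- If ξ = (1,2,…,n-p, n-p+2, …, n+1) and σ ∈ S_n is not the identity, then
∏_{i=1}^n [ξ_i ⊵ σ(i)] = 0, where u ⊵ v means u - v ∈ {0,1}. -/
theorem xi_unique (n : ℕ) (p : ℕ) (hp : p ≤ n) (ξ : Fin n → ℤ)
    (hξ : ∀ i : Fin n,
      ξ i = if (i : ℕ) + 1 ≤ n - p then ((i : ℕ) : ℤ) + 1 else ((i : ℕ) : ℤ) + 2)
    (σ : Equiv.Perm (Fin n)) (hσ : σ ≠ 1) :
    (∏ i : Fin n,
        if ξ i - (((σ i : ℕ) : ℤ) + 1) = 0 ∨ ξ i - (((σ i : ℕ) : ℤ) + 1) = 1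
        then (1 : ℤ) else 0) = 0 := by
  by_contra hne
  apply hσ
  have hfac : ∀ i : Fin n, ξ i - (((σ i : ℕ) : ℤ) + 1) = 0 ∨
      ξ i - (((σ i : ℕ) : ℤ) + 1) = 1 := by
    intro i
    by_contra hc
    exact hne (Finset.prod_eq_zero (Finset.mem_univ i) (by simp [hc]))
  have key : ∀ i : Fin n, if (i : ℕ) + 1 ≤ n - p then
      ((σ i : ℕ) = (i : ℕ) ∨ (σ i : ℕ) + 1 = (i : ℕ))
      else ((σ i : ℕ) = (i : ℕ) + 1 ∨ (σ i : ℕ) = (i : ℕ)) := by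
    intro i
    rcases hfac i with h | h <;> rw [hξ i] at h <;> split at h <;> split <;>
      first | omega | simp_all
  have low : ∀ k, ∀ i : Fin n, (i : ℕ) = k → (i : ℕ) + 1 ≤ n - p →
      (σ i : ℕ) = (i : ℕ) := by
    intro k
    induction k using Nat.strong_induction_on with
    | _ k ih =>
      intro i hik hle
      have hk := key i
      rw [if_pos hle] at hk
      rcases hk with h | h
      · exact h
      · exfalso
        have hj : (σ i : ℕ) < n := (σ i).isLt
        set j : Fin n := ⟨(σ i : ℕ), hj⟩ with hjdef
        have hjval : (j : ℕ) = (σ i : ℕ) := rfl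
        have hji : (j : ℕ) + 1 ≤ n - p := by omega
        have hsj : (σ j : ℕ) = (j : ℕ) := ih (j : ℕ) (by omega) j rfl hji
        have heq : σ j = σ i := Fin.ext (by omega)
        have := congrArg Fin.val (σ.injective heq)
        omega
  have high : ∀ k, ∀ i : Fin n, (i : ℕ) = n - 1 - k → ¬ ((i : ℕ) + 1 ≤ n - p) →
      (σ i : ℕ) = (i : ℕ) := by
    intro k
    induction k using Nat.strong_induction_on with
    | _ k ih =>
      intro i hik hle
      have hk := key i
      rw [if_neg hle] at hk
      rcases hk with h | h
      · exfalso
        have hsi : (σ i : ℕ) < n := (σ i).isLt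
        have hlt : (i : ℕ) + 1 < n := by omega
        set j : Fin n := ⟨(i : ℕ) + 1, hlt⟩ with hjdef
        have hjval : (j : ℕ) = (i : ℕ) + 1 := rfl
        have hk1 : 1 ≤ k := by omega
        have hji : ¬ ((j : ℕ) + 1 ≤ n - p) := by omega
        have hsj : (σ j : ℕ) = (j : ℕ) :=
          ih (n - 1 - (j : ℕ)) (by omega) j (by omega) hji
        have heq : σ j = σ i := Fin.ext (by omega)
        have := congrArg Fin.val (σ.injective heq)
        omega
      · exact h
  ext i
  simp only [Equiv.Perm.coe_one, id_eq]
  by_cases hc : (i : ℕ) + 1 ≤ n - p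
  · exact low (i : ℕ) i rfl hc
  · have hin : (i : ℕ) < n := i.isLt
    exact high (n - 1 - (i : ℕ)) i (by omega) hc
end

section
/- Let n ∈ ℕ and p ∈ {0,1,…,n}. Let ξ ∈ ℤ^n satisfy ξ_i = i for 1 ≤ i ≤ n-p and ξ_i = i+1 for n-p+1 ≤ i ≤ n. Let ν ∈ ℤ^n satisfy |ν| = |ξ|. Then det(([ν_i ⊵ j])_{i,j ∈ [n]}) = Σ_{σ ∈ S_n, ν = ξ∘σ} (-1)^σ, where ξ∘σ := (ξ_{σ(1)}, …, ξ_{σ(n)}) and u ⊵ v means u - v ∈ {0,1}. -/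
/-!
A repeated entry of `ν` gives two equal rows and an entry outside `[1, n + 1]` a zero row, so the
determinant vanishes unless `ν` is injective with values in `[1, n + 1]`. Then `ν` misses exactly
one value of that interval, and `|ν| = |ξ|` forces it to be the value `n - p + 1` missed by `ξ`.
Hence `ν = ξ ∘ σ` for a unique `σ`, and the matrix of `ν` is that of `ξ` with rows permuted by
`σ`. The matrix of `ξ` is triangular with unit diagonal after reordering the indices, so its
determinant is `1`.
-/

open Finset Function Matrix Equiv

namespace Matrix

variable {m α R : Type*} [Fintype m] [DecidableEq m] [LinearOrder α] [CommRing R]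

theorem BlockTriangular.det_of_injective {M : Matrix m m R} {b : m → α}
    (hM : M.BlockTriangular b) (hb : Injective b) : M.det = ∏ i, M i i := by
  classical
  rw [hM.det, prod_image hb.injOn]
  refine prod_congr rfl fun i _ => ?_
  let : Unique { j // b j = b i } := ⟨⟨⟨i, rfl⟩⟩, fun j => Subtype.ext (hb j.2)⟩
  exact (det_unique (M.toSquareBlock b (b i))).trans rfl

end Matrix

theorem Finset.eq_of_sum_eq_of_card_add_one {α : Type*} [DecidableEq α] [AddCancelCommMonoid α]
    {s t u : Finset α} (hs : s ⊆ u) (ht : t ⊆ u) (hsu : #s + 1 = #u) (htu : #t + 1 = #u)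
    (hst : ∑ x ∈ s, x = ∑ x ∈ t, x) : s = t := by
  have erase_of_subset {v : Finset α} (hv : v ⊆ u) (hvu : #v + 1 = #u) : ∃ a ∈ u, u.erase a = v :=
    (covBy_iff_card_sdiff_eq_one.2 ⟨hv, by rw [card_sdiff_of_subset hv]; omega⟩).exists_finset_erase
  obtain ⟨a, ha, rfl⟩ := erase_of_subset hs hsu
  obtain ⟨b, hb, rfl⟩ := erase_of_subset ht htu
  have : ∑ x ∈ u.erase b, x + a = ∑ x ∈ u.erase b, x + b := by
    rw [← hst, sum_erase_add u _ ha, hst, sum_erase_add u _ hb]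
  rw [add_left_cancel this]

theorem Equiv.Perm.exists_forall_eq_comp {ι α : Type*} [Finite ι] {ν ξ : ι → α}
    (hν : Injective ν) (h : ∀ i, ∃ j, ξ j = ν i) : ∃ σ : Perm ι, ∀ i, ν i = ξ (σ i) := by
  choose f hf using h
  have hf_inj : Injective f := fun a b hab => hν (by rw [← hf a, ← hf b, hab])
  exact ⟨Equiv.ofBijective f hf_inj.bijective_of_finite, fun i => (hf i).symm⟩

theorem Equiv.Perm.filter_forall_eq_comp_eq_singleton {ι α : Type*} [Fintype ι] [DecidableEq ι]
    {ν ξ : ι → α} [DecidablePred fun τ : Perm ι => ∀ i, ν i = ξ (τ i)] (hξ : Injective ξ)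
    {σ : Perm ι} (hσ : ∀ i, ν i = ξ (σ i)) :
    univ.filter (fun τ : Perm ι => ∀ i, ν i = ξ (τ i)) = {σ} := by
  ext τ
  simp only [mem_filter, mem_univ, true_and, mem_singleton]
  refine ⟨fun hτ => Equiv.ext fun i => hξ ?_, fun h => h ▸ hσ⟩
  rw [← hτ, hσ]

/-- The matrix `([ν i ⊵ j])` of the paper, with `u ⊵ v` meaning `u - v ∈ {0, 1}` and the
column `j : Fin n` standing for `j + 1`. -/
def unrhdMatrix {n : ℕ} (ν : Fin n → ℤ) : Matrix (Fin n) (Fin n) ℤ :=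
  Matrix.of fun i j =>
    if ν i - (((j : ℕ) : ℤ) + 1) = 0 ∨ ν i - (((j : ℕ) : ℤ) + 1) = 1 then 1 else 0

/-- `ξ = (1, 2, …, n - p, n - p + 2, …, n + 1)`, with `i : Fin n` standing for `i + 1`. -/
def xi (n p : ℕ) (i : Fin n) : ℤ :=
  if (i : ℕ) + 1 ≤ n - p then ((i : ℕ) : ℤ) + 1 else ((i : ℕ) : ℤ) + 2

theorem unrhdMatrix_comp_perm {n : ℕ} (ξ : Fin n → ℤ) (σ : Perm (Fin n)) :
    unrhdMatrix (ξ ∘ σ) = (unrhdMatrix ξ).submatrix σ id :=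
  rfl

theorem xi_injective (n p : ℕ) : Injective (xi n p) := by
  intro i j hij
  simp only [xi] at hij
  split_ifs at hij <;> omega

theorem xi_mem_Icc (n p : ℕ) (i : Fin n) : xi n p i ∈ Icc 1 ((n : ℤ) + 1) := by
  simp only [xi, mem_Icc]
  split_ifs <;> omega

/-- The first `n - p` rows are lower bidiagonal and the others upper bidiagonal, so ordering the
indices as `n - p - 1, …, 1, 0, n - p, …, n - 1` makes the matrix upper triangular. -/
theorem det_unrhdMatrix_xi (n p : ℕ) : (unrhdMatrix (xi n p)).det = 1 := by
  let b : Fin n → ℤ := fun i => if (i : ℕ) + 1 ≤ n - p then -(i : ℤ) else i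
  have hb : Injective b := by
    intro i j hij
    simp only [b] at hij
    split_ifs at hij <;> omega
  have hM : (unrhdMatrix (xi n p)).BlockTriangular b := by
    intro i j hji
    simp only [b] at hji
    simp only [unrhdMatrix, xi, of_apply]
    split_ifs at hji ⊢ <;> omega
  rw [hM.det_of_injective hb]
  refine prod_eq_one fun i _ => ?_
  simp only [unrhdMatrix, xi, of_apply]
  split_ifs <;> omega

theorem image_eq_image_xi {n p : ℕ} {ν : Fin n → ℤ} (hν : Injective ν)
    (hν_mem : ∀ i, ν i ∈ Icc 1 ((n : ℤ) + 1)) (hsum : ∑ i, ν i = ∑ i, xi n p i) :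
    univ.image ν = univ.image (xi n p) := by
  have hcard : #(Icc 1 ((n : ℤ) + 1)) = n + 1 := by simp
  refine eq_of_sum_eq_of_card_add_one (u := Icc 1 ((n : ℤ) + 1)) ?_ ?_ ?_ ?_ ?_
  · simpa [image_subset_iff] using hν_mem
  · simpa [image_subset_iff] using xi_mem_Icc n p
  · rw [card_image_of_injective _ hν, hcard, card_univ, Fintype.card_fin]
  · rw [card_image_of_injective _ (xi_injective n p), hcard, card_univ, Fintype.card_fin]
  · rwa [sum_image hν.injOn, sum_image (xi_injective n p).injOn]

theorem exists_perm_of_det_unrhdMatrix_ne_zero {n p : ℕ} {ν : Fin n → ℤ}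
    (hsum : ∑ i, ν i = ∑ i, xi n p i) (hdet : (unrhdMatrix ν).det ≠ 0) :
    ∃ σ : Perm (Fin n), ∀ i, ν i = xi n p (σ i) := by
  have hν : Injective ν := by
    intro i j hij
    by_contra hne
    exact hdet (det_zero_of_row_eq hne (by ext k; simp [unrhdMatrix, hij]))
  have hν_mem : ∀ i, ν i ∈ Icc 1 ((n : ℤ) + 1) := by
    intro i
    by_contra hi
    refine hdet (det_eq_zero_of_row_eq_zero i fun j => ?_)
    simp only [mem_Icc] at hi
    simp only [unrhdMatrix, of_apply]
    rw [if_neg]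
    omega
  have himage := image_eq_image_xi hν hν_mem hsum
  refine Perm.exists_forall_eq_comp hν fun i => ?_
  have : ν i ∈ univ.image (xi n p) := himage ▸ mem_image_of_mem ν (mem_univ i)
  simpa using this

theorem xi_det_general (n : ℕ) (p : ℕ) (ξ : Fin n → ℤ)
    (hξ : ∀ i : Fin n,
      ξ i = if (i : ℕ) + 1 ≤ n - p then ((i : ℕ) : ℤ) + 1 else ((i : ℕ) : ℤ) + 2)
    (ν : Fin n → ℤ) (hsum : ∑ i, ν i = ∑ i, ξ i) :
    Matrix.det (Matrix.of fun i j : Fin n =>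
        if ν i - (((j : ℕ) : ℤ) + 1) = 0 ∨ ν i - (((j : ℕ) : ℤ) + 1) = 1 then (1 : ℤ) else 0)
      = ∑ σ ∈ Finset.univ.filter (fun σ : Equiv.Perm (Fin n) => ∀ i, ν i = ξ (σ i)),
          (Equiv.Perm.sign σ : ℤ) := by
  obtain rfl : ξ = xi n p := funext hξ
  change (unrhdMatrix ν).det = _
  by_cases h : ∃ σ : Perm (Fin n), ∀ i, ν i = xi n p (σ i)
  · obtain ⟨σ, hσ⟩ := h
    rw [Perm.filter_forall_eq_comp_eq_singleton (xi_injective n p) hσ, sum_singleton,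
      show ν = xi n p ∘ σ from funext hσ, unrhdMatrix_comp_perm, det_permute, det_unrhdMatrix_xi,
      mul_one, Int.cast_id]
  · rw [filter_false_of_mem fun σ _ => not_exists.mp h σ, sum_empty]
    by_contra hdet
    exact h (exists_perm_of_det_unrhdMatrix_ne_zero hsum hdet)

/-- If ξ = (1,2,…,n-p, n-p+2, …, n+1) and |ν| = |ξ|, then
det(([ν_i ⊵ j])) = Σ_{σ : ν = ξ∘σ} (-1)^σ, where u ⊵ v means u - v ∈ {0,1}. -/
theorem xi_det (n : ℕ) (p : ℕ) (hp : p ≤ n) (ξ : Fin n → ℤ)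
    (hξ : ∀ i : Fin n,
      ξ i = if (i : ℕ) + 1 ≤ n - p then ((i : ℕ) : ℤ) + 1 else ((i : ℕ) : ℤ) + 2)
    (ν : Fin n → ℤ) (hsum : ∑ i, ν i = ∑ i, ξ i) :
    Matrix.det (Matrix.of fun i j : Fin n =>
        if ν i - (((j : ℕ) : ℤ) + 1) = 0 ∨ ν i - (((j : ℕ) : ℤ) + 1) = 1 then (1 : ℤ) else 0)
      = ∑ σ ∈ Finset.univ.filter (fun σ : Equiv.Perm (Fin n) => ∀ i, ν i = ξ (σ i)),
          (Equiv.Perm.sign σ : ℤ) :=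
  xi_det_general n p ξ hξ ν hsum
end

section
/- Let R be a (possibly noncommutative) ring, n ∈ ℕ, and k ∈ {0,1,…,n}. Let A = (a_{i,j})_{i,j ∈ [n]} be an n×n matrix over R such that a_{i,j} = 0 whenever i ∈ {k+1, …, n} and j ∈ {1, …, k} (block lower-left zero). Then rowdet A = rowdet((a_{i,j})_{i,j ∈ [k]}) · rowdet((a_{k+i, k+j})_{i,j ∈ [n-k]}). -/
open Equiv Equiv.Perm Finset

theorem Equiv.Perm.exists_apply_inr_eq_inl_of_notMem_sumCongrHom_range {α β : Type*}
    [Finite α] [Finite β] {τ : Perm (α ⊕ β)} (hτ : τ ∉ (sumCongrHom α β).range) :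
    ∃ b a, τ (Sum.inr b) = Sum.inl a := by
  by_contra! h
  refine hτ (mem_sumCongrHom_range_of_perm_mapsTo_inl ((perm_mapsTo_inl_iff_mapsTo_inr τ).mpr ?_))
  rintro _ ⟨b, rfl⟩
  cases hb : τ (Sum.inr b) with
  | inl a => exact absurd hb (h b a)
  | inr b' => exact ⟨b', rfl⟩

section BlockTriangular

variable {R : Type*} [Ring R] {k m : ℕ}

lemma prod_ofFn_permCongr_eq_zero (A : Matrix (Fin (k + m)) (Fin (k + m)) R)
    (hA : ∀ i j, A (Fin.natAdd k i) (Fin.castAdd m j) = 0) {τ : Perm (Fin k ⊕ Fin m)}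
    (hτ : τ ∉ (sumCongrHom (Fin k) (Fin m)).range) :
    (List.ofFn fun i => A i (finSumFinEquiv.permCongr τ i)).prod = 0 := by
  obtain ⟨b, a, hba⟩ := exists_apply_inr_eq_inl_of_notMem_sumCongrHom_range hτ
  have hzero : A (Fin.natAdd k b) (finSumFinEquiv.permCongr τ (Fin.natAdd k b)) = 0 := by
    simpa [permCongr_apply, hba] using hA b a
  exact List.prod_eq_zero (List.mem_ofFn.mpr ⟨Fin.natAdd k b, hzero⟩)

lemma prod_ofFn_permCongr_sumCongr (A : Matrix (Fin (k + m)) (Fin (k + m)) R)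
    (σ₁ : Perm (Fin k)) (σ₂ : Perm (Fin m)) :
    (List.ofFn fun i => A i (finSumFinEquiv.permCongr (σ₁.sumCongr σ₂) i)).prod
      = (List.ofFn fun i => A (Fin.castAdd m i) (Fin.castAdd m (σ₁ i))).prod
        * (List.ofFn fun i => A (Fin.natAdd k i) (Fin.natAdd k (σ₂ i))).prod := by
  have hcast (h : k ≤ k + m) (i : Fin k) : Fin.castLE h i = Fin.castAdd m i := rfl
  simp [List.ofFn_add, permCongr_apply, hcast]

theorem rowdet_eq_mul_of_natAdd_castAdd_eq_zero (A : Matrix (Fin (k + m)) (Fin (k + m)) R)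
    (hA : ∀ i j, A (Fin.natAdd k i) (Fin.castAdd m j) = 0) :
    rowdet A = rowdet (A.submatrix (Fin.castAdd m) (Fin.castAdd m))
      * rowdet (A.submatrix (Fin.natAdd k) (Fin.natAdd k)) := by
  set term : Perm (Fin k ⊕ Fin m) → R := fun τ =>
    (sign τ : ℤ) • (List.ofFn fun i => A i (finSumFinEquiv.permCongr τ i)).prod
  have hvanish : ∀ τ ∈ univ, τ ∉ univ.map ⟨sumCongrHom (Fin k) (Fin m), sumCongrHom_injective⟩ →
      term τ = 0 := by
    intro τ _ hτ
    have hτ' : τ ∉ (sumCongrHom (Fin k) (Fin m)).range :=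
      fun ⟨p, hp⟩ => hτ (mem_map.mpr ⟨p, mem_univ _, hp⟩)
    simp only [term, prod_ofFn_permCongr_eq_zero A hA hτ', smul_zero]
  calc rowdet A = ∑ τ, term τ :=
        (Fintype.sum_equiv (permCongr finSumFinEquiv) _ _ fun τ => by simp [term]).symm
    _ = ∑ p : Perm (Fin k) × Perm (Fin m), term (p.1.sumCongr p.2) := by
        rw [← sum_subset (subset_univ _) hvanish, sum_map]
        rfl
    _ = _ := by
        rw [rowdet, rowdet, sum_mul_sum, ← Fintype.sum_prod_type']
        refine Fintype.sum_congr _ _ fun p => ?_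
        simp only [term, prod_ofFn_permCongr_sumCongr, sign_sumCongr, Units.val_mul,
          smul_mul_smul_comm]
        rfl

lemma rowdet_submatrix_finCast {a b : ℕ} (h : b = a) (A : Matrix (Fin a) (Fin a) R) :
    rowdet (A.submatrix (Fin.cast h) (Fin.cast h)) = rowdet A := by
  subst h
  rfl

end BlockTriangular

/-- Row-determinant of a block upper-triangular matrix: if a_{i,j} = 0 whenever i > k and
j ≤ k, then rowdet A = rowdet(top-left k×k block) · rowdet(bottom-right (n-k)×(n-k) block). -/
theorem rowdet_block_triangular (R : Type*) [Ring R] (n k : ℕ) (hk : k ≤ n)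
    (A : Matrix (Fin n) (Fin n) R)
    (hA : ∀ i j : Fin n, k ≤ (i : ℕ) → (j : ℕ) < k → A i j = 0) :
    rowdet A
      = rowdet (Matrix.of fun i j : Fin k => A (Fin.castLE hk i) (Fin.castLE hk j))
        * rowdet (Matrix.of fun i j : Fin (n - k) =>
            A ⟨k + (i : ℕ), by have := i.isLt; omega⟩ ⟨k + (j : ℕ), by have := j.isLt; omega⟩) := by
  obtain ⟨m, rfl⟩ : ∃ m, n = k + m := ⟨n - k, by omega⟩
  rw [rowdet_eq_mul_of_natAdd_castAdd_eq_zero A fun i j => hA _ _ (by simp) (by simp),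
    ← rowdet_submatrix_finCast (by omega : k + m - k = m)]
  rfl
end

section
/- Let R be a (possibly noncommutative) ring, n a positive integer, and p an integer. Given h_{k,i} ∈ R for all k ∈ ℤ, i ∈ [n], with h_{k,n} = 0 for all k < 0, define t_α := rowdet((h_{α_i + j, i})_{i,j ∈ [n]}) for α ∈ ℤ^n. Let α ∈ ℤ^n with α_n ≤ -n. Then Σ_{β ∈ ℕ^n, |β| = p} t_{α+β} = rowdet((h_{α_i + j, i})_{i,j ∈ [n-1]}) · h_{α_n + n + p, n}. -/
open Equiv Finset

namespace PrePieriAux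

/-- `Fin n` is equivalent to the non-last elements of `Fin (n+1)`. -/
def lastEquiv (n : ℕ) : Fin n ≃ {x : Fin (n + 1) // (x : ℕ) < n} where
  toFun i := ⟨i.castSucc, i.isLt⟩
  invFun x := ⟨x.1, x.2⟩
  left_inv _ := rfl
  right_inv _ := rfl

/-- Extend a permutation of `Fin n` to `Fin (n+1)` fixing the last element. -/
def permLast {n : ℕ} (τ : Perm (Fin n)) : Perm (Fin (n + 1)) :=
  τ.extendDomain (lastEquiv n)

lemma permLast_castSucc {n : ℕ} (τ : Perm (Fin n)) (i : Fin n) :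
    permLast τ i.castSucc = (τ i).castSucc :=
  τ.extendDomain_apply_image (lastEquiv n) i

lemma permLast_last {n : ℕ} (τ : Perm (Fin n)) : permLast τ (Fin.last n) = Fin.last n :=
  τ.extendDomain_apply_not_subtype _ (by simp)

lemma sign_permLast {n : ℕ} (τ : Perm (Fin n)) : Perm.sign (permLast τ) = Perm.sign τ :=
  Perm.sign_extendDomain τ _

/-- Uniqueness: any permutation dominated rowwise by a pattern equals the extension. -/
lemma perm_eq_permLast {n : ℕ} (τ : Perm (Fin n)) (σ : Perm (Fin (n + 1)))
    (hσ : ∀ i : Fin n, ((σ i.castSucc : Fin (n + 1)) : ℕ) ≤ (τ i : ℕ)) :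
    σ = permLast τ := by
  have key : ∀ k : ℕ, ∀ i : Fin n, (τ i : ℕ) = k → σ i.castSucc = (τ i).castSucc := by
    intro k
    induction k using Nat.strong_induction_on with
    | _ k IH =>
      intro i hik
      have h1 : ((σ i.castSucc : Fin (n + 1)) : ℕ) ≤ k := hik ▸ hσ i
      rcases eq_or_lt_of_le h1 with heq | hlt
      · exact Fin.ext (by simp [heq, hik])
      · exfalso
        have hxn : ((σ i.castSucc : Fin (n + 1)) : ℕ) < n :=
          lt_of_lt_of_le hlt (hik ▸ (τ i).isLt.le)
        set x : Fin n := ⟨(σ i.castSucc : Fin (n + 1)) , hxn⟩ with hx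
        obtain ⟨i', hi'⟩ : ∃ i', τ i' = x := ⟨τ.symm x, τ.apply_symm_apply x⟩
        have h2 : σ i'.castSucc = (τ i').castSucc := IH (x : ℕ) hlt i' (by rw [hi'])
        have h3 : σ i'.castSucc = σ i.castSucc := by
          apply Fin.ext
          rw [h2, hi']
          rfl
        have h4 : i' = i := Fin.castSucc_injective _ (σ.injective h3)
        rw [← h4, hi'] at hik
        exact absurd hik (Nat.ne_of_lt hlt)
  have hcs : ∀ i : Fin n, σ i.castSucc = (τ i).castSucc := fun i => key _ i rfl
  have hlast : σ (Fin.last n) = Fin.last n := by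
    rcases Fin.eq_castSucc_or_eq_last (σ (Fin.last n)) with ⟨j, hj⟩ | hl
    · exfalso
      have : σ ((τ.symm j).castSucc) = j.castSucc := by
        rw [hcs (τ.symm j), τ.apply_symm_apply]
      have h5 : σ (Fin.last n) = σ ((τ.symm j).castSucc) := by rw [hj, this]
      have := σ.injective h5
      exact (Fin.castSucc_lt_last (τ.symm j)).ne' this
    · exact hl
  ext x
  rcases Fin.eq_castSucc_or_eq_last x with ⟨j, hj⟩ | hl
  · rw [hj, hcs, permLast_castSucc]
  · rw [hl, hlast, permLast_last]

/-- Sign-sum vanishing when two rows have equivalent column conditions. -/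
lemma sum_sign_eq_zero {m : ℕ} (c : Fin m → ℕ) (a b : Fin m) (hab : a ≠ b)
    (hc : ∀ x : Fin m, ((x : ℕ) ≤ c a ↔ (x : ℕ) ≤ c b)) :
    ∑ σ : Perm (Fin m), (if ∀ r, ((σ r : Fin m) : ℕ) ≤ c r then ((Perm.sign σ : ℤˣ) : ℤ) else 0)
      = 0 := by
  have hswap : ∀ σ : Perm (Fin m), (∀ r, ((σ r : Fin m) : ℕ) ≤ c r) →
      (∀ r, (((σ * Equiv.swap a b) r : Fin m) : ℕ) ≤ c r) := by
    intro σ hσ r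
    rcases eq_or_ne r a with rfl | hra
    · rw [Perm.mul_apply, Equiv.swap_apply_left]
      exact (hc _).mpr (hσ b)
    rcases eq_or_ne r b with rfl | hrb
    · rw [Perm.mul_apply, Equiv.swap_apply_right]
      exact (hc _).mp (hσ a)
    · rw [Perm.mul_apply, Equiv.swap_apply_of_ne_of_ne hra hrb]
      exact hσ r
  have hiff : ∀ σ : Perm (Fin m),
      (∀ r, (((σ * Equiv.swap a b) r : Fin m) : ℕ) ≤ c r) ↔ (∀ r, ((σ r : Fin m) : ℕ) ≤ c r) := by
    intro σ
    constructor
    · intro hh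
      have := hswap _ hh
      simpa [mul_assoc] using this
    · exact hswap σ
  apply Finset.sum_ninvolution (g := fun σ => σ * Equiv.swap a b)
  · intro σ
    by_cases hcond : ∀ r, ((σ r : Fin m) : ℕ) ≤ c r
    · rw [if_pos hcond, if_pos ((hiff σ).mpr hcond)]
      simp [Perm.sign_swap hab]
    · rw [if_neg hcond, if_neg (fun hh => hcond ((hiff σ).mp hh))]
      simp
  · intro σ hne hEq
    have h1 : Equiv.swap a b = 1 := by
      have h2 : σ * Equiv.swap a b = σ * 1 := by rw [hEq, mul_one]
      exact mul_left_cancel h2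
    have := congrArg (fun e : Perm (Fin m) => e a) h1
    simp at this
    exact hab this.symm
  · intro σ; exact Finset.mem_univ _
  · intro σ; simp [mul_assoc]

end PrePieriAux

/-- Corollary of the first pre-Pieri rule (positive size realized as n+1):
if h_{k,last} = 0 for k < 0 and α_last ≤ -(n+1), then
Σ_{β ∈ ℕ^{n+1}, |β| = p} t_{α+β} = rowdet((h_{α_i+j,i})_{i,j∈[n]}) · h_{α_last+(n+1)+p, last}. -/
theorem pre_pieri_cor2 {R : Type*} [Ring R] (n : ℕ) (p : ℤ)
    (h : ℤ → Fin (n + 1) → R)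
    (h0 : ∀ k : ℤ, k < 0 → h k (Fin.last n) = 0)
    (α : Fin (n + 1) → ℤ) (hα : α (Fin.last n) ≤ -((n : ℤ) + 1)) :
    (∑ᶠ (β : Fin (n + 1) → ℕ) (_ : ∑ i, (β i : ℤ) = p),
        rowdet (Matrix.of fun i j : Fin (n + 1) =>
          h (α i + (β i : ℤ) + (((j : ℕ) : ℤ) + 1)) i))
      = rowdet (Matrix.of fun i j : Fin n =>
            h (α i.castSucc + (((j : ℕ) : ℤ) + 1)) i.castSucc)
        * h (α (Fin.last n) + ((n : ℤ) + 1) + p) (Fin.last n) := by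
  classical
  rcases lt_or_ge p 0 with hp | hp
  · have hR : α (Fin.last n) + ((n : ℤ) + 1) + p < 0 := by linarith
    rw [h0 _ hR, mul_zero]
    apply finsum_eq_zero_of_forall_eq_zero
    intro β
    have hne : ¬(∑ i, (β i : ℤ)) = p := by
      have h1 : (0 : ℤ) ≤ ∑ i, (β i : ℤ) := Finset.sum_nonneg fun i _ => Int.natCast_nonneg _
      intro hE
      rw [hE] at h1
      linarith
    haveI : IsEmpty (∑ i, (β i : ℤ) = p) := ⟨hne⟩
    exact finsum_of_isEmpty _
  · lift p to ℕ using hp with q hq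
    set T : ℕ := ∑ i : Fin (n + 1), (i : ℕ) with hT
    have hnT : n ≤ T := by
      have := Finset.single_le_sum (f := fun i : Fin (n + 1) => (i : ℕ))
        (fun i _ => Nat.zero_le _) (Finset.mem_univ (Fin.last n))
      simpa using this
    have hT' : (∑ j : Fin n, (j : ℕ)) + n = T := by
      rw [hT, Fin.sum_univ_castSucc]
      simp
    have hσT : ∀ σ : Perm (Fin (n + 1)), (∑ r, ((σ r : Fin (n + 1)) : ℕ)) = T := fun σ =>
      Equiv.sum_comp σ (fun i : Fin (n + 1) => (i : ℕ))
    set B : Finset (Fin (n + 1) → ℕ) :=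
      (Fintype.piFinset fun _ : Fin (n + 1) => Finset.range (q + 1)).filter
        (fun β => ∑ i, β i = q) with hB
    set Call : Finset (Fin (n + 1) → ℕ) :=
      (Fintype.piFinset fun _ : Fin (n + 1) => Finset.range (q + T + 1)).filter
        (fun c => ∑ i, c i = q + T) with hCall
    set P : (Fin (n + 1) → ℕ) → R := fun c =>
      (List.ofFn fun i : Fin (n + 1) => h (α i + (c i : ℤ) + 1) i).prod with hP
    set Φ : Perm (Fin n) → (Fin (n + 1) → ℕ) := fun τ =>
      fun x => Fin.lastCases (q + n) (fun i => ((τ i : Fin n) : ℕ)) x with hΦ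
    set N : (Fin (n + 1) → ℕ) → ℤ := fun c =>
      ∑ σ : Perm (Fin (n + 1)), if ∀ r, ((σ r : Fin (n + 1)) : ℕ) ≤ c r
        then ((Perm.sign σ : ℤˣ) : ℤ) else 0 with hN
    have hΦcast : ∀ (τ : Perm (Fin n)) (i : Fin n), Φ τ i.castSucc = ((τ i : Fin n) : ℕ) := by
      intro τ i
      simp [hΦ]
    have hΦlast : ∀ τ : Perm (Fin n), Φ τ (Fin.last n) = q + n := by
      intro τ
      simp [hΦ]
    -- Step A : replace the finsum by a finite sum over B
    have hBmem : ∀ β : Fin (n + 1) → ℕ, ((∑ i, (β i : ℤ)) = (q : ℤ)) ↔ β ∈ B := by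
      intro β
      rw [← Nat.cast_sum, Nat.cast_inj]
      simp only [hB, Finset.mem_filter, Fintype.mem_piFinset, Finset.mem_range, Nat.lt_succ_iff]
      constructor
      · intro hs
        exact ⟨fun i => hs ▸ Finset.single_le_sum (fun i _ => Nat.zero_le _)
          (Finset.mem_univ i), hs⟩
      · exact And.right
    have stepA : (∑ᶠ (β : Fin (n + 1) → ℕ) (_ : ∑ i, (β i : ℤ) = (q : ℤ)),
        rowdet (Matrix.of fun i j : Fin (n + 1) =>
          h (α i + (β i : ℤ) + (((j : ℕ) : ℤ) + 1)) i))
        = ∑ β ∈ B, rowdet (Matrix.of fun i j : Fin (n + 1) =>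
          h (α i + (β i : ℤ) + (((j : ℕ) : ℤ) + 1)) i) := by
      rw [← finsum_mem_coe_finset]
      apply finsum_congr
      intro β
      exact finsum_congr_Prop (propext ((hBmem β).trans (Finset.mem_coe).symm)) (fun _ => rfl)
    rw [stepA]
    -- vanishing off the pattern image
    have hzero : ∀ c, c ∈ Call → c ∉ Finset.image Φ Finset.univ → N c • P c = 0 := by
      intro c hcC hcim
      have hsum : (∑ i, c i) = q + T := (Finset.mem_filter.mp hcC).2
      by_cases h1 : ∀ i : Fin n, c i.castSucc < n
      · by_cases h2 : Function.Injective (fun i : Fin n => (⟨c i.castSucc, h1 i⟩ : Fin n))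
        · exfalso
          apply hcim
          have hbij : Function.Bijective (fun i : Fin n => (⟨c i.castSucc, h1 i⟩ : Fin n)) :=
            Finite.injective_iff_bijective.mp h2
          set τ : Perm (Fin n) := Equiv.ofBijective _ hbij with hτ
          have hτv : ∀ i, ((τ i : Fin n) : ℕ) = c i.castSucc := fun i => rfl
          have hclast : c (Fin.last n) = q + n := by
            have e1 : (∑ x : Fin (n + 1), c x) = (∑ i : Fin n, c i.castSucc) + c (Fin.last n) :=
              Fin.sum_univ_castSucc _
            have e2 : (∑ i : Fin n, c i.castSucc) = ∑ j : Fin n, (j : ℕ) := by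
              calc (∑ i : Fin n, c i.castSucc) = ∑ i : Fin n, ((τ i : Fin n) : ℕ) :=
                    Finset.sum_congr rfl fun i _ => (hτv i).symm
                _ = _ := Equiv.sum_comp τ _
            omega
          refine Finset.mem_image.mpr ⟨τ, Finset.mem_univ _, ?_⟩
          funext x
          induction x using Fin.lastCases with
          | last => rw [hΦlast, hclast]
          | cast i => rw [hΦcast, hτv]
        · obtain ⟨a, b, hval, hne⟩ := Function.not_injective_iff.mp h2
          have hNc : N c = 0 := by
            rw [hN]
            apply PrePieriAux.sum_sign_eq_zero c a.castSucc b.castSucc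
              (fun hE => hne (Fin.castSucc_injective _ hE))
            intro x
            have hv : c a.castSucc = c b.castSucc := congrArg Fin.val hval
            rw [hv]
          rw [hNc, zero_smul]
      · push_neg at h1
        obtain ⟨i₀, hi₀⟩ := h1
        by_cases h2 : n ≤ c (Fin.last n)
        · have hNc : N c = 0 := by
            rw [hN]
            apply PrePieriAux.sum_sign_eq_zero c i₀.castSucc (Fin.last n)
              (Fin.castSucc_lt_last i₀).ne
            intro x
            exact iff_of_true (le_trans (Fin.is_le x) hi₀) (le_trans (Fin.is_le x) h2)
          rw [hNc, zero_smul]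
        · push_neg at h2
          have hneg : α (Fin.last n) + (c (Fin.last n) : ℤ) + 1 < 0 := by
            have hcast : (c (Fin.last n) : ℤ) < (n : ℤ) := by exact_mod_cast h2
            linarith
          have hPc : P c = 0 := by
            rw [hP]
            simp only []
            rw [List.ofFn_succ', List.prod_concat, h0 _ hneg, mul_zero]
          rw [hPc, smul_zero]
    have hΦCall : ∀ τ : Perm (Fin n), Φ τ ∈ Call := by
      intro τ
      rw [hCall, Finset.mem_filter]
      constructor
      · rw [Fintype.mem_piFinset]
        intro x
        rw [Finset.mem_range, Nat.lt_succ_iff]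
        induction x using Fin.lastCases with
        | last => rw [hΦlast]; omega
        | cast i => rw [hΦcast]; have := (τ i).isLt; omega
      · rw [Fin.sum_univ_castSucc]
        have e2 : (∑ i : Fin n, Φ τ i.castSucc) = ∑ j : Fin n, (j : ℕ) := by
          calc (∑ i : Fin n, Φ τ i.castSucc) = ∑ i : Fin n, ((τ i : Fin n) : ℕ) :=
                Finset.sum_congr rfl fun i _ => hΦcast τ i
            _ = _ := Equiv.sum_comp τ _
        rw [e2, hΦlast]
        omega
    have hΦinj : ∀ x ∈ (Finset.univ : Finset (Perm (Fin n))), ∀ y ∈ Finset.univ,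
        Φ x = Φ y → x = y := by
      intro τ1 _ τ2 _ hE
      ext i
      have hE2 := congrFun hE i.castSucc
      rw [hΦcast, hΦcast] at hE2
      exact hE2
    have hNΦ : ∀ τ : Perm (Fin n), N (Φ τ) = ((Perm.sign τ : ℤˣ) : ℤ) := by
      intro τ
      have hcond : ∀ σ : Perm (Fin (n + 1)),
          (∀ r, ((σ r : Fin (n + 1)) : ℕ) ≤ Φ τ r) ↔ σ = PrePieriAux.permLast τ := by
        intro σ
        constructor
        · intro hcd
          apply PrePieriAux.perm_eq_permLast
          intro i
          have := hcd i.castSucc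
          rwa [hΦcast] at this
        · rintro rfl r
          induction r using Fin.lastCases with
          | last => rw [PrePieriAux.permLast_last, hΦlast]; simp
          | cast i => rw [PrePieriAux.permLast_castSucc, hΦcast]; simp
      rw [hN]
      calc (∑ σ : Perm (Fin (n + 1)), if ∀ r, ((σ r : Fin (n + 1)) : ℕ) ≤ Φ τ r
              then ((Perm.sign σ : ℤˣ) : ℤ) else 0)
          = ∑ σ : Perm (Fin (n + 1)), if σ = PrePieriAux.permLast τ
              then ((Perm.sign σ : ℤˣ) : ℤ) else 0 :=
            Finset.sum_congr rfl fun σ _ => if_congr (hcond σ) rfl rfl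
        _ = ((Perm.sign (PrePieriAux.permLast τ) : ℤˣ) : ℤ) := by
            rw [Finset.sum_ite_eq' Finset.univ (PrePieriAux.permLast τ)
              (fun σ => ((Perm.sign σ : ℤˣ) : ℤ))]
            simp
        _ = _ := by rw [PrePieriAux.sign_permLast]
    have hPΦ : ∀ τ : Perm (Fin n), P (Φ τ) =
        (List.ofFn fun i : Fin n =>
          h (α i.castSucc + (((τ i : Fin n) : ℕ) : ℤ) + 1) i.castSucc).prod
          * h (α (Fin.last n) + ((n : ℤ) + 1) + (q : ℤ)) (Fin.last n) := by
      intro τ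
      rw [hP]
      simp only []
      rw [List.ofFn_succ', List.prod_concat]
      congr 1
      · exact congrArg List.prod (congrArg List.ofFn (funext fun i => by rw [hΦcast]))
      · rw [hΦlast]
        exact congrArg (fun z => h z (Fin.last n)) (by push_cast; ring)
    -- main computation
    calc (∑ β ∈ B, rowdet (Matrix.of fun i j : Fin (n + 1) =>
            h (α i + (β i : ℤ) + (((j : ℕ) : ℤ) + 1)) i))
        = ∑ β ∈ B, ∑ σ : Perm (Fin (n + 1)),
            (Perm.sign σ : ℤ) • P (fun r => β r + ((σ r : Fin (n + 1)) : ℕ)) := by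
          apply Finset.sum_congr rfl
          intro β _
          simp only [rowdet, Matrix.of_apply, hP]
          apply Finset.sum_congr rfl
          intro σ _
          congr 1
          exact congrArg List.prod (congrArg List.ofFn (funext fun i =>
            congrArg (fun z => h z i) (by push_cast; ring)))
      _ = ∑ σ : Perm (Fin (n + 1)), ∑ β ∈ B,
            (Perm.sign σ : ℤ) • P (fun r => β r + ((σ r : Fin (n + 1)) : ℕ)) :=
          Finset.sum_comm
      _ = ∑ σ : Perm (Fin (n + 1)),
            ∑ c ∈ Call.filter (fun c => ∀ r, ((σ r : Fin (n + 1)) : ℕ) ≤ c r),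
            (Perm.sign σ : ℤ) • P c := by
          apply Finset.sum_congr rfl
          intro σ _
          apply Finset.sum_nbij' (i := fun β => fun r => β r + ((σ r : Fin (n + 1)) : ℕ))
            (j := fun c => fun r => c r - ((σ r : Fin (n + 1)) : ℕ))
          · intro β hβ
            simp only [hB, Finset.mem_filter, Fintype.mem_piFinset, Finset.mem_range,
              Nat.lt_succ_iff] at hβ
            obtain ⟨hβr, hβs⟩ := hβ
            rw [Finset.mem_filter]
            constructor
            · rw [hCall, Finset.mem_filter]
              constructor
              · rw [Fintype.mem_piFinset]
                intro r
                rw [Finset.mem_range, Nat.lt_succ_iff]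
                have := hβr r
                have := Fin.is_le (σ r)
                omega
              · rw [Finset.sum_add_distrib, hβs, hσT]
            · intro r
              exact Nat.le_add_left _ _
          · intro c hc
            rw [Finset.mem_filter] at hc
            obtain ⟨hcC, hcond⟩ := hc
            rw [hCall, Finset.mem_filter] at hcC
            obtain ⟨hcr, hcs⟩ := hcC
            have hs : (∑ r, (c r - ((σ r : Fin (n + 1)) : ℕ))) = q := by
              rw [Finset.sum_tsub_distrib Finset.univ (fun r _ => hcond r), hcs, hσT]
              omega
            rw [hB, Finset.mem_filter]
            constructor
            · rw [Fintype.mem_piFinset]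
              intro r
              rw [Finset.mem_range, Nat.lt_succ_iff]
              exact hs ▸ Finset.single_le_sum (f := fun r => c r - ((σ r : Fin (n + 1)) : ℕ))
                (fun _ _ => Nat.zero_le _) (Finset.mem_univ r)
            · exact hs
          · intro β _
            funext r
            show β r + ((σ r : Fin (n + 1)) : ℕ) - ((σ r : Fin (n + 1)) : ℕ) = β r
            omega
          · intro c hc
            rw [Finset.mem_filter] at hc
            funext r
            show c r - ((σ r : Fin (n + 1)) : ℕ) + ((σ r : Fin (n + 1)) : ℕ) = c r
            have := hc.2 r
            omega
          · intro β _
            rfl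
      _ = ∑ σ : Perm (Fin (n + 1)), ∑ c ∈ Call,
            if ∀ r, ((σ r : Fin (n + 1)) : ℕ) ≤ c r then (Perm.sign σ : ℤ) • P c else 0 :=
          Finset.sum_congr rfl fun σ _ => Finset.sum_filter _ _
      _ = ∑ c ∈ Call, ∑ σ : Perm (Fin (n + 1)),
            if ∀ r, ((σ r : Fin (n + 1)) : ℕ) ≤ c r then (Perm.sign σ : ℤ) • P c else 0 :=
          Finset.sum_comm
      _ = ∑ c ∈ Call, N c • P c := by
          apply Finset.sum_congr rfl
          intro c _
          rw [hN]
          simp only []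
          rw [Finset.sum_smul]
          apply Finset.sum_congr rfl
          intro σ _
          split <;> simp
      _ = ∑ c ∈ Call.filter (· ∈ Finset.image Φ Finset.univ), N c • P c :=
          (Finset.sum_filter_of_ne fun c hc hne => by
            by_contra him
            exact hne (hzero c hc him)).symm
      _ = ∑ c ∈ Finset.image Φ Finset.univ, N c • P c := by
          congr 1
          rw [Finset.filter_mem_eq_inter]
          exact Finset.inter_eq_right.mpr (fun c hc => by
            obtain ⟨τ, _, rfl⟩ := Finset.mem_image.mp hc
            exact hΦCall τ)
      _ = ∑ τ : Perm (Fin n), N (Φ τ) • P (Φ τ) := Finset.sum_image hΦinj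
      _ = ∑ τ : Perm (Fin n), (Perm.sign τ : ℤ) •
            ((List.ofFn fun i : Fin n =>
              h (α i.castSucc + (((τ i : Fin n) : ℕ) : ℤ) + 1) i.castSucc).prod
              * h (α (Fin.last n) + ((n : ℤ) + 1) + (q : ℤ)) (Fin.last n)) := by
          apply Finset.sum_congr rfl
          intro τ _
          rw [hNΦ, hPΦ]
      _ = rowdet (Matrix.of fun i j : Fin n =>
            h (α i.castSucc + (((j : ℕ) : ℤ) + 1)) i.castSucc)
          * h (α (Fin.last n) + ((n : ℤ) + 1) + (q : ℤ)) (Fin.last n) := by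
          simp only [rowdet, Matrix.of_apply]
          rw [Finset.sum_mul]
          apply Finset.sum_congr rfl
          intro τ _
          rw [smul_mul_assoc]
          congr 2
          apply congrArg List.prod
          apply congrArg List.ofFn
          funext i
          exact congrArg (fun z => h z i.castSucc) (by ring)
end

section
/- Let R be a (possibly noncommutative) ring, n a positive integer, and p an integer. Given h_{k,i} ∈ R with h_{k,n} = 0 for all k < 0, define for any m ∈ {0,…,n} and λ ∈ ℤ^m the element s_λ := rowdet((h_{λ_i + j - i, i})_{i,j ∈ [m]}). Fix μ ∈ ℤ^n with μ_n = 0, and let μ̄ = (μ_1, …, μ_{n-1}). Then s_{μ̄} · h_{p,n} = Σ_{β ∈ ℕ^n, |β| = p} s_{μ+β}. -/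
open Finset Equiv

namespace PrePieriAux

/-- staircase 0-1 matrix -/
def stair {m : ℕ} (c : Fin m → ℕ) : Matrix (Fin m) (Fin m) ℤ :=
  Matrix.of fun a b => if (a : ℕ) ≤ c b then 1 else 0

lemma sum_sign_eq_det_stair {m : ℕ} (c : Fin m → ℕ) :
    ∑ σ ∈ Finset.univ.filter (fun σ : Equiv.Perm (Fin m) => ∀ i, ((σ i : ℕ)) ≤ c i),
      ((Equiv.Perm.sign σ : ℤ)) = (stair c).det := by
  rw [Matrix.det_apply, Finset.sum_filter]
  refine Finset.sum_congr rfl fun σ _ => ?_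
  rw [show (∏ i, stair c (σ i) i) = ∏ i, (if ((σ i : ℕ)) ≤ c i then (1 : ℤ) else 0) from rfl,
    Fintype.prod_boole]
  split <;> simp [Units.smul_def]

lemma det_stair_col_eq {m : ℕ} (c : Fin m → ℕ) {b b' : Fin m} (hne : b ≠ b')
    (hcb : ∀ a : Fin m, ((a : ℕ) ≤ c b ↔ (a : ℕ) ≤ c b')) : (stair c).det = 0 := by
  refine Matrix.det_zero_of_column_eq hne fun a => ?_
  simp only [stair, Matrix.of_apply]
  by_cases hca : (a : ℕ) ≤ c b
  · rw [if_pos hca, if_pos ((hcb a).1 hca)]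
  · rw [if_neg hca, if_neg (fun hh => hca ((hcb a).2 hh))]

/-- equivalence between `Fin n` and the non-last elements of `Fin (n+1)` -/
def castSuccEquiv (n : ℕ) : Fin n ≃ {b : Fin (n + 1) // (b : ℕ) < n} where
  toFun i := ⟨i.castSucc, i.isLt⟩
  invFun b := ⟨b.1.1, b.2⟩
  left_inv _ := rfl
  right_inv _ := rfl

lemma det_stair_good {n : ℕ} (τ : Equiv.Perm (Fin n)) (N : ℕ) (hN : n ≤ N)
    (c : Fin (n + 1) → ℕ) (hc1 : ∀ i : Fin n, c i.castSucc = (τ i : ℕ))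
    (hc2 : c (Fin.last n) = N) :
    (stair c).det = (Equiv.Perm.sign τ : ℤ) := by
  set π : Equiv.Perm (Fin (n + 1)) := τ.extendDomain (castSuccEquiv n) with hπ
  have hmat : stair c = (stair (fun b : Fin (n + 1) => (b : ℕ))).submatrix id π := by
    ext a b
    simp only [stair, Matrix.submatrix_apply, Matrix.of_apply, id]
    by_cases hb : (b : ℕ) < n
    · have hπb : π b = (τ ⟨b, hb⟩).castSucc :=
        Equiv.Perm.extendDomain_apply_subtype τ (castSuccEquiv n) hb
      have hbeq : Fin.castSucc ⟨(b : ℕ), hb⟩ = b := Fin.ext rfl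
      have hcb : c b = (τ ⟨(b : ℕ), hb⟩ : ℕ) := by
        rw [← hc1 ⟨(b : ℕ), hb⟩]; exact congrArg c hbeq.symm
      rw [hcb, hπb]; simp
    · have hbl : b = Fin.last n := by
        apply Fin.ext
        rw [Fin.val_last]
        have := b.isLt
        omega
      have hπb : π b = b := Equiv.Perm.extendDomain_apply_not_subtype _ _ hb
      rw [hπb, hbl, hc2]
      have h1 : (a : ℕ) ≤ N := by have := a.isLt; omega
      have h2 : (a : ℕ) ≤ ((Fin.last n : Fin (n + 1)) : ℕ) := by
        rw [Fin.val_last]; have := a.isLt; omega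
      rw [if_pos h1, if_pos h2]
  have hdet1 : (stair (fun b : Fin (n + 1) => (b : ℕ))).det = 1 := by
    rw [Matrix.det_of_upperTriangular]
    · apply Finset.prod_eq_one
      intro i _
      simp [stair]
    · intro i j hij
      simp only [stair, Matrix.of_apply]
      rw [if_neg]
      exact fun hh => absurd (Fin.le_def.mpr hh) (not_le.mpr hij)
  rw [hmat, Matrix.det_permute', hdet1, mul_one, hπ, Equiv.Perm.sign_extendDomain]; norm_cast

end PrePieriAux

open PrePieriAux in
/-- Corollary of the first pre-Pieri rule (positive size realized as n+1), with
s_λ := rowdet((h_{λ_i+j-i, i})): if μ_last = 0 and h_{k,last} = 0 for k < 0, then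
s_{μ̄} · h_{p,last} = Σ_{β ∈ ℕ^{n+1}, |β| = p} s_{μ+β}. -/
theorem pre_pieri_cor4 {R : Type*} [Ring R] (n : ℕ) (p : ℤ)
    (h : ℤ → Fin (n + 1) → R)
    (h0 : ∀ k : ℤ, k < 0 → h k (Fin.last n) = 0)
    (μ : Fin (n + 1) → ℤ) (hμ : μ (Fin.last n) = 0) :
    rowdet (Matrix.of fun i j : Fin n =>
          h (μ i.castSucc + ((j : ℕ) : ℤ) - ((i : ℕ) : ℤ)) i.castSucc)
        * h p (Fin.last n)
      = ∑ᶠ (β : Fin (n + 1) → ℕ) (_ : ∑ i, (β i : ℤ) = p),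
          rowdet (Matrix.of fun i j : Fin (n + 1) =>
            h (μ i + (β i : ℤ) + ((j : ℕ) : ℤ) - ((i : ℕ) : ℤ)) i) := by
  classical
  rcases lt_or_ge p 0 with hp | hp
  · -- p < 0 : both sides vanish
    rw [finsum_cond_eq_sum_of_cond_iff _ (t := (∅ : Finset (Fin (n + 1) → ℕ)))
      (fun {x} _ => by
        constructor
        · intro hx
          exfalso
          have hnn : (0 : ℤ) ≤ ∑ i, (x i : ℤ) :=
            Finset.sum_nonneg fun i _ => Int.natCast_nonneg _
          omega
        · intro hx
          exact absurd hx (Finset.notMem_empty x))]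
    rw [Finset.sum_empty, h0 p hp, mul_zero]
  · -- p ≥ 0
    set Tz : ℤ := ∑ i : Fin (n + 1), ((i : ℕ) : ℤ) with hTz
    have hTzsplit : Tz = (∑ i : Fin n, ((i : ℕ) : ℤ)) + n := by
      rw [hTz, Fin.sum_univ_castSucc]
      simp
    set P : (Fin (n + 1) → ℕ) → R := fun c =>
      (List.ofFn fun i : Fin (n + 1) => h (μ i + (c i : ℤ) - ((i : ℕ) : ℤ)) i).prod with hP
    set Bfin : Finset (Fin (n + 1) → ℕ) :=
      (Fintype.piFinset fun _ => Finset.range (p.toNat + 1)).filter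
        (fun β => ∑ i, (β i : ℤ) = p) with hBfin
    set Cfin : Finset (Fin (n + 1) → ℕ) :=
      (Fintype.piFinset fun _ => Finset.range (p.toNat + n + 1)).filter
        (fun c => ∑ i, (c i : ℤ) = p + Tz) with hCfin
    -- Step A : finsum to Finset sum
    rw [finsum_cond_eq_sum_of_cond_iff _ (t := Bfin) (fun {x} _ => by
      rw [hBfin, Finset.mem_filter, Fintype.mem_piFinset]
      constructor
      · intro hx
        refine ⟨fun i => ?_, hx⟩
        rw [Finset.mem_range]
        have h1 : ((x i : ℤ)) ≤ ∑ j, (x j : ℤ) :=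
          Finset.single_le_sum (fun j _ => Int.natCast_nonneg (x j)) (Finset.mem_univ i)
        rw [hx] at h1
        omega
      · exact fun hx => hx.2)]
    -- Step B+C : expand rowdet and reindex to Cfin
    have stepBC : ∑ β ∈ Bfin,
        rowdet (Matrix.of fun i j : Fin (n + 1) =>
          h (μ i + (β i : ℤ) + ((j : ℕ) : ℤ) - ((i : ℕ) : ℤ)) i)
        = ∑ c ∈ Cfin, (stair c).det • P c := by
      simp only [rowdet, Matrix.of_apply]
      rw [Finset.sum_comm]
      have hinner : ∀ σ : Equiv.Perm (Fin (n + 1)),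
          ∑ β ∈ Bfin, (Equiv.Perm.sign σ : ℤ) •
            (List.ofFn fun i => h (μ i + (β i : ℤ) + (((σ i : Fin (n+1)) : ℕ) : ℤ)
              - ((i : ℕ) : ℤ)) i).prod
          = ∑ c ∈ Cfin, (if ∀ i, ((σ i : ℕ)) ≤ c i then (Equiv.Perm.sign σ : ℤ) • P c else 0) := by
        intro σ
        rw [← Finset.sum_filter]
        refine Finset.sum_nbij' (i := fun β => fun i => β i + (σ i : ℕ))
          (j := fun c => fun i => c i - (σ i : ℕ)) ?_ ?_ ?_ ?_ ?_
        · intro β hβ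
          rw [hBfin, Finset.mem_filter, Fintype.mem_piFinset] at hβ
          obtain ⟨hβ1, hβ2⟩ := hβ
          rw [Finset.mem_filter, Finset.mem_filter, Fintype.mem_piFinset]
          beta_reduce
          refine ⟨⟨fun i => ?_, ?_⟩, fun i => Nat.le_add_left _ _⟩
          · rw [Finset.mem_range]
            have h1 := hβ1 i
            rw [Finset.mem_range] at h1
            have h2 := (σ i).isLt
            omega
          · push_cast
            rw [Finset.sum_add_distrib, hβ2, hTz]
            congr 1
            exact Equiv.sum_comp σ (fun i : Fin (n + 1) => ((i : ℕ) : ℤ))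
        · intro c hc
          rw [Finset.mem_filter, Finset.mem_filter, Fintype.mem_piFinset] at hc
          obtain ⟨⟨hc1, hc2⟩, hc3⟩ := hc
          rw [hBfin, Finset.mem_filter, Fintype.mem_piFinset]
          beta_reduce
          have hsum : ∑ i, ((c i - (σ i : ℕ) : ℕ) : ℤ) = p := by
            have heq : ∀ i : Fin (n + 1),
                ((c i - (σ i : ℕ) : ℕ) : ℤ) = (c i : ℤ) - ((σ i : ℕ) : ℤ) :=
              fun i => by rw [Nat.cast_sub (hc3 i)]
            rw [Finset.sum_congr rfl fun i _ => heq i, Finset.sum_sub_distrib, hc2,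
              Equiv.sum_comp σ (fun i : Fin (n + 1) => ((i : ℕ) : ℤ))]
            omega
          refine ⟨fun i => ?_, hsum⟩
          rw [Finset.mem_range]
          have h1 : ((c i - (σ i : ℕ) : ℕ) : ℤ) ≤ ∑ j, ((c j - (σ j : ℕ) : ℕ) : ℤ) :=
            Finset.single_le_sum (fun j _ => Int.natCast_nonneg _) (Finset.mem_univ i)
          rw [hsum] at h1
          omega
        · intro β hβ
          funext i
          show β i + (σ i : ℕ) - (σ i : ℕ) = β i
          omega
        · intro c hc
          rw [Finset.mem_filter] at hc
          funext i
          show c i - (σ i : ℕ) + (σ i : ℕ) = c i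
          have := hc.2 i
          omega
        · intro β hβ
          beta_reduce
          rw [hP]
          beta_reduce
          have harg : (fun i : Fin (n + 1) =>
              h (μ i + (β i : ℤ) + (((σ i : Fin (n+1)) : ℕ) : ℤ) - ((i : ℕ) : ℤ)) i)
              = (fun i : Fin (n + 1) =>
              h (μ i + ((β i + (σ i : ℕ) : ℕ) : ℤ) - ((i : ℕ) : ℤ)) i) :=
            funext fun i => congrArg (fun t => h t i) (by push_cast; ring)
          rw [harg]
      rw [Finset.sum_congr rfl fun σ _ => hinner σ, Finset.sum_comm]
      refine Finset.sum_congr rfl fun c _ => ?_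
      rw [← Finset.sum_filter, ← sum_sign_eq_det_stair, Finset.sum_smul]
    rw [stepBC]
    -- Step D : restrict to good c
    set good : (Fin (n + 1) → ℕ) → Prop := fun c =>
      ∃ τ : Equiv.Perm (Fin n), (∀ i : Fin n, c i.castSucc = (τ i : ℕ)) ∧
        c (Fin.last n) = p.toNat + n with hgood
    rw [← Finset.sum_filter_of_ne (p := good) (fun c hc hne => ?_)]
    · -- Step E : reindex good c's by permutations, identify with the LHS
      set cOf : Equiv.Perm (Fin n) → (Fin (n + 1) → ℕ) := fun τ b =>
        if hb : (b : ℕ) < n then (τ ⟨b, hb⟩ : ℕ) else p.toNat + n with hcOf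
      have hcastlt : ∀ i : Fin n, ((i.castSucc : Fin (n + 1)) : ℕ) < n := fun i => i.isLt
      have hcs : ∀ (τ : Equiv.Perm (Fin n)) (i : Fin n), cOf τ i.castSucc = (τ i : ℕ) := by
        intro τ i
        rw [hcOf]
        beta_reduce
        rw [dif_pos (hcastlt i)]
        exact congrArg (fun x : Fin n => ((τ x : Fin n) : ℕ)) (Fin.ext rfl)
      have hclast : ∀ τ : Equiv.Perm (Fin n), cOf τ (Fin.last n) = p.toNat + n := by
        intro τ
        rw [hcOf]
        beta_reduce
        rw [dif_neg (by rw [Fin.val_last]; omega)]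
      have hpn : ((p.toNat + n : ℕ) : ℤ) = p + n := by
        push_cast [Int.toNat_of_nonneg hp]
        ring
      have stepE : ∑ c ∈ Cfin.filter good, (stair c).det • P c
          = ∑ τ : Equiv.Perm (Fin n), (Equiv.Perm.sign τ : ℤ) •
              ((List.ofFn fun i : Fin n =>
                h (μ i.castSucc + ((τ i : ℕ) : ℤ) - ((i : ℕ) : ℤ)) i.castSucc).prod
                * h p (Fin.last n)) := by
        refine (Finset.sum_nbij (i := cOf) ?_ ?_ ?_ ?_).symm
        · -- membership
          intro τ _
          rw [Finset.mem_filter, Finset.mem_filter, Fintype.mem_piFinset]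
          refine ⟨⟨fun b => ?_, ?_⟩, τ, hcs τ, hclast τ⟩
          · rw [Finset.mem_range, hcOf]
            beta_reduce
            by_cases hb : (b : ℕ) < n
            · rw [dif_pos hb]
              have := (τ ⟨b, hb⟩).isLt
              omega
            · rw [dif_neg hb]
              omega
          · rw [Fin.sum_univ_castSucc,
              Finset.sum_congr rfl fun i _ => by rw [hcs τ i], hclast τ]
            have hsc : ∑ i : Fin n, ((τ i : ℕ) : ℤ) = ∑ i : Fin n, ((i : ℕ) : ℤ) :=
              Equiv.sum_comp τ (fun i : Fin n => ((i : ℕ) : ℤ))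
            rw [hsc, hTzsplit, hpn]
            ring
        · -- injectivity
          intro τ1 _ τ2 _ heq
          ext i
          have h1 := congrFun heq i.castSucc
          rw [hcs τ1 i, hcs τ2 i] at h1
          exact h1
        · -- surjectivity
          intro c hc
          rw [Finset.coe_filter, Set.mem_setOf_eq] at hc
          obtain ⟨hcC, τ, hτ1, hτ2⟩ := hc
          refine ⟨τ, Finset.mem_coe.mpr (Finset.mem_univ τ), ?_⟩
          funext b
          by_cases hb : (b : ℕ) < n
          · have hbeq : Fin.castSucc ⟨(b : ℕ), hb⟩ = b := Fin.ext rfl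
            rw [← hbeq, hcs τ, hτ1]
          · have hbl : b = Fin.last n := by
              apply Fin.ext
              rw [Fin.val_last]
              have := b.isLt
              omega
            rw [hbl, hclast τ, hτ2]
        · -- term equality
          intro τ _
          have hdet : (stair (cOf τ)).det = (Equiv.Perm.sign τ : ℤ) :=
            det_stair_good τ (p.toNat + n) (Nat.le_add_left n p.toNat) (cOf τ)
              (hcs τ) (hclast τ)
          have hPc : P (cOf τ) = (List.ofFn fun i : Fin n =>
              h (μ i.castSucc + ((τ i : ℕ) : ℤ) - ((i : ℕ) : ℤ)) i.castSucc).prod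
              * h p (Fin.last n) := by
            rw [hP]
            beta_reduce
            rw [List.ofFn_succ', List.prod_concat]
            congr 1
            · refine congrArg List.prod (congrArg List.ofFn (funext fun i => ?_))
              rw [hcs τ i]
              exact congrArg (fun t => h t i.castSucc) (by rw [Fin.coe_castSucc])
            · rw [hclast τ, hμ, Fin.val_last]
              exact congrArg (fun t => h t (Fin.last n)) (by rw [hpn]; ring)
          rw [hdet, hPc]
      rw [stepE]
      -- Step F : LHS expansion
      simp only [rowdet, Matrix.of_apply, Finset.sum_mul]
      exact Finset.sum_congr rfl fun τ _ => (smul_mul_assoc _ _ _)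
    · -- Step D classification : nonzero terms are good
      rw [hCfin, Finset.mem_filter, Fintype.mem_piFinset] at hc
      obtain ⟨hc1, hc2⟩ := hc
      by_contra hng
      apply hne
      by_cases hlast : c (Fin.last n) < n
      · -- P c = 0
        have hPc : P c = 0 := by
          rw [hP]
          beta_reduce
          rw [List.ofFn_succ', List.prod_concat]
          have hz : h (μ (Fin.last n) + (c (Fin.last n) : ℤ)
              - (((Fin.last n : Fin (n+1)) : ℕ) : ℤ)) (Fin.last n) = 0 := by
            apply h0
            rw [hμ, Fin.val_last]
            omega
          rw [hz, mul_zero]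
        rw [hPc, smul_zero]
      · push_neg at hlast
        by_cases hbig : ∃ i : Fin n, n ≤ c i.castSucc
        · obtain ⟨i, hi⟩ := hbig
          have hdet : (stair c).det = 0 := by
            refine det_stair_col_eq c (b := i.castSucc) (b' := Fin.last n) ?_ ?_
            · exact Fin.ne_of_lt (Fin.castSucc_lt_last i)
            · intro a
              have ha := a.isLt
              constructor <;> intro _ <;> omega
          rw [hdet, zero_smul]
        · push_neg at hbig
          by_cases hinj : Function.Injective (fun i : Fin n => c i.castSucc)
          · -- c is good, contradicting hng
            exfalso
            apply hng
            rw [hgood]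
            have hbij : Function.Bijective (fun i : Fin n => (⟨c i.castSucc, hbig i⟩ : Fin n)) := by
              apply Finite.injective_iff_bijective.mp
              intro i j hij
              apply hinj
              simpa using congrArg Fin.val hij
            set τ : Equiv.Perm (Fin n) := Equiv.ofBijective _ hbij with hτ
            have hτa : ∀ i : Fin n, (τ i : ℕ) = c i.castSucc := fun i => rfl
            refine ⟨τ, fun i => (hτa i).symm, ?_⟩
            have hsplit : ∑ i : Fin (n + 1), (c i : ℤ)
                = (∑ i : Fin n, (c i.castSucc : ℤ)) + (c (Fin.last n) : ℤ) :=
              Fin.sum_univ_castSucc (fun i : Fin (n + 1) => (c i : ℤ))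
            have hτs : ∑ i : Fin n, (c i.castSucc : ℤ) = ∑ i : Fin n, ((i : ℕ) : ℤ) := by
              rw [Finset.sum_congr rfl fun i _ => by rw [← hτa i]]
              exact Equiv.sum_comp τ (fun i : Fin n => ((i : ℕ) : ℤ))
            rw [hc2, hτs, hTzsplit] at hsplit
            have hlf : (c (Fin.last n) : ℤ) = p + n := by omega
            have hpn : ((p.toNat + n : ℕ) : ℤ) = p + n := by
              push_cast [Int.toNat_of_nonneg hp]
              ring
            omega
          · -- two equal columns give vanishing determinant
            rw [Function.not_injective_iff] at hinj
            obtain ⟨i, j, hij, hne2⟩ := hinj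
            have hdet : (stair c).det = 0 := by
              refine det_stair_col_eq c (b := i.castSucc) (b' := j.castSucc) ?_ ?_
              · simp only [ne_eq, Fin.castSucc_inj]
                exact hne2
              · intro a
                rw [hij]
            rw [hdet, zero_smul]
end

section
/- Let R be a commutative ring, n a positive integer, and p an integer. Given h_{k,i} ∈ R with h_{k,n} = 0 for all k < 0, define for m ∈ {0,…,n} and λ ∈ ℤ^m the element s_λ := det((h_{λ_i + j - i, i})_{i,j ∈ [m]}). Fix μ ∈ ℤ^n with μ_n = 0 and set μ̄ = (μ_1, …, μ_{n-1}). Then h_{p,n} · s_{μ̄} = Σ_{β ∈ ℕ^n, |β| = p} s_{μ+β}. -/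
/-!
Put `N i j := ∑_b h_{μ_i + b + j - i, i} X^b`. Since the determinant is multilinear in the rows,
the coefficient of `X^p` in `det N` is the right-hand side. On the other hand, the column
operations `C_j ← C_j - X C_{j+1}` (`j < n`) telescope every column but the last to its constant
term `h_{μ_i + j - i, i}`. As `μ_n = 0` and `h_{k,n} = 0` for `k < 0`, the last row then vanishes
off the diagonal, so `det N = N_{n,n} · s_μ̄`, whose coefficient of `X^p` is `h_{p,n} s_μ̄`.
-/

open Finset PowerSeries

theorem PowerSeries.coeff_prod_eq_sum_piAntidiag {R ι : Type*} [CommSemiring R] [DecidableEq ι]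
    (f : ι → R⟦X⟧) (d : ℕ) (s : Finset ι) :
    coeff d (∏ j ∈ s, f j) = ∑ l ∈ piAntidiag s d, ∏ i ∈ s, coeff (l i) (f i) := by
  rw [coeff_prod, finsuppAntidiag, sum_map]
  exact sum_attach _ fun l : ι → ℕ => ∏ i ∈ s, coeff (l i) (f i)

namespace Matrix

variable {R : Type*} [CommRing R] {m : ℕ}

theorem det_eq_of_forall_col_eq_smul_add_succ {A B : Matrix (Fin (m + 1)) (Fin (m + 1)) R}
    (c : Fin m → R) (A_last : ∀ i, A i (Fin.last m) = B i (Fin.last m))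
    (A_castSucc : ∀ i (j : Fin m), A i j.castSucc = B i j.castSucc + c j * A i j.succ) :
    det A = det B := by
  rw [← det_submatrix_equiv_self Fin.revPerm A, ← det_submatrix_equiv_self Fin.revPerm B]
  refine det_eq_of_forall_col_eq_smul_add_pred (c ∘ Fin.rev) (fun i => ?_) fun i j => ?_
  · simpa using A_last _
  · simpa [Fin.rev_succ, Fin.rev_castSucc] using A_castSucc _ j.rev

theorem det_succ_eq_mul_det_of_last_row {A : Matrix (Fin (m + 1)) (Fin (m + 1)) R}
    (hA : ∀ j : Fin m, A (Fin.last m) j.castSucc = 0) :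
    A.det = A (Fin.last m) (Fin.last m) * (A.submatrix Fin.castSucc Fin.castSucc).det := by
  rw [det_succ_row A (Fin.last m), Fin.sum_univ_castSucc]
  simp [hA, Fin.succAbove_last]

theorem det_eq_of_col_succ_eq_shift (N : Matrix (Fin (m + 1)) (Fin (m + 1)) R⟦X⟧)
    (hN : ∀ i (j : Fin m), N i j.succ = mk fun b => coeff (b + 1) (N i j.castSucc))
    (hlast : ∀ j : Fin m, constantCoeff (N (Fin.last m) j.castSucc) = 0) :
    N.det = N (Fin.last m) (Fin.last m) *
      C (of fun i j : Fin m => constantCoeff (N i.castSucc j.castSucc)).det := by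
  let V : Matrix (Fin (m + 1)) (Fin (m + 1)) R⟦X⟧ :=
    of fun i j => if j = Fin.last m then N i j else C (constantCoeff (N i j))
  have hNV : N.det = V.det := by
    refine det_eq_of_forall_col_eq_smul_add_succ (fun _ => X) (fun i => by simp [V])
      fun i j => ?_
    simp only [V, of_apply, Fin.castSucc_ne_last, if_false, hN]
    rw [add_comm, mul_comm]
    exact eq_shift_mul_X_add_const _
  rw [hNV, det_succ_eq_mul_det_of_last_row (by simp [V, hlast]), RingHom.map_det]
  congr 2
  · simp [V]
  · ext i j
    simp [V, Fin.castSucc_ne_last]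

theorem coeff_det {ι : Type*} [Fintype ι] [DecidableEq ι] (M : Matrix ι ι R⟦X⟧) (d : ℕ) :
    coeff d M.det = ∑ β ∈ piAntidiag univ d, (of fun i j => coeff (β i) (M i j)).det := by
  simp_rw [← det_transpose M, ← det_transpose (of _), det_apply, map_sum, Units.smul_def,
    map_zsmul, coeff_prod_eq_sum_piAntidiag, smul_sum]
  rw [sum_comm]
  rfl

end Matrix

theorem finsum_sum_intCast_eq_sum_piAntidiag {ι M : Type*} [Fintype ι] [DecidableEq ι]
    [AddCommMonoid M] (f : (ι → ℕ) → M) (q : ℕ) :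
    ∑ᶠ (β : ι → ℕ) (_ : ∑ i, (β i : ℤ) = q), f β = ∑ β ∈ piAntidiag univ q, f β := by
  rw [← finsum_mem_coe_finset]
  congr! with β
  simp [← Nat.cast_sum]

/-- Commutative version of the corollary of the first pre-Pieri rule (positive size
realized as n+1), with s_λ := det((h_{λ_i+j-i, i})): if μ_last = 0 and h_{k,last} = 0
for k < 0, then h_{p,last} · s_{μ̄} = Σ_{β ∈ ℕ^{n+1}, |β| = p} s_{μ+β}. -/
theorem pre_pieri_cor4_comm {R : Type*} [CommRing R] (n : ℕ) (p : ℤ)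
    (h : ℤ → Fin (n + 1) → R)
    (h0 : ∀ k : ℤ, k < 0 → h k (Fin.last n) = 0)
    (μ : Fin (n + 1) → ℤ) (hμ : μ (Fin.last n) = 0) :
    h p (Fin.last n)
        * Matrix.det (Matrix.of fun i j : Fin n =>
            h (μ i.castSucc + ((j : ℕ) : ℤ) - ((i : ℕ) : ℤ)) i.castSucc)
      = ∑ᶠ (β : Fin (n + 1) → ℕ) (_ : ∑ i, (β i : ℤ) = p),
          Matrix.det (Matrix.of fun i j : Fin (n + 1) =>
            h (μ i + (β i : ℤ) + ((j : ℕ) : ℤ) - ((i : ℕ) : ℤ)) i) := by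
  classical
  rcases lt_or_ge p 0 with hp | hp
  · rw [h0 p hp, zero_mul, eq_comm]
    refine finsum_eq_zero_of_forall_eq_zero fun β => ?_
    rw [finsum_eq_if, if_neg (hp.trans_le (sum_nonneg fun i _ => by positivity)).ne']
  obtain ⟨q, rfl⟩ := Int.eq_ofNat_of_zero_le hp
  let N : Matrix (Fin (n + 1)) (Fin (n + 1)) R⟦X⟧ :=
    .of fun i j => mk fun b => h (μ i + b + j - i) i
  have hshift : ∀ i (j : Fin n), N i j.succ = mk fun b => coeff (b + 1) (N i j.castSucc) := by
    intro i j
    ext b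
    simp only [N, Matrix.of_apply, coeff_mk, Fin.val_succ, Fin.val_castSucc]
    congr 1
    push_cast
    ring
  have hlast (j : Fin n) : constantCoeff (N (Fin.last n) j.castSucc) = 0 := h0 _ (by simp [hμ])
  calc
    _ = coeff q N.det := by
      rw [Matrix.det_eq_of_col_succ_eq_shift N hshift hlast, coeff_mul_C]
      simp [N, hμ]
    _ = _ := by
      rw [Matrix.coeff_det, finsum_sum_intCast_eq_sum_piAntidiag]
      simp [N]
end

section
/- In the ring Λ of symmetric functions over ℤ, with h_0 = 1 and h_k = 0 for k < 0, define s_λ := det((h_{λ_i - i + j})_{i,j ∈ [n]}) for λ ∈ ℤ^n, and define e_p := s_{(1,1,…,1)} (p ones). Let λ = (λ_1, …, λ_n) be a partition and p ∈ {0,1,…,n} with λ_{n-p+1} = λ_{n-p+2} = ⋯ = λ_n = 0. Then s_λ · e_p = Σ_{β ∈ {0,1}^n, β_1 + ⋯ + β_n = p} s_{λ+β}. -/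
/-- The ring Λ of symmetric functions over ℤ, realized as the polynomial ring
ℤ[h₁, h₂, h₃, …] where the variable indexed by i ∈ ℕ is h_{i+1}. -/
noncomputable abbrev Lambda : Type := MvPolynomial ℕ ℤ

/-- The complete homogeneous generator h_k ∈ Λ: h_k is the variable X (k-1) for k > 0,
h_0 = 1, and h_k = 0 for k < 0. -/
noncomputable def hh (k : ℤ) : Lambda :=
  if 0 < k then MvPolynomial.X (k.toNat - 1) else if k = 0 then 1 else 0

/-- The generalized Schur function s_λ ∈ Λ for λ ∈ ℤ^n, defined by the
Jacobi–Trudi determinant. -/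
noncomputable def schur {n : ℕ} (lam : Fin n → ℤ) : Lambda :=
  Matrix.det (Matrix.of fun i j : Fin n => hh (lam i - ((i : ℕ) : ℤ) + ((j : ℕ) : ℤ)))

/-- The p-th elementary symmetric function e_p = s_{(1,1,…,1)} (p ones). -/
noncomputable def ee (p : ℕ) : Lambda := schur (fun _ : Fin p => (1 : ℤ))

set_option linter.unreachableTactic false
set_option linter.unusedTactic false
set_option linter.unusedVariables false
set_option maxHeartbeats 1000000

section PieriAux

open Matrix Polynomial

lemma hh_neg {k : ℤ} (h : k < 0) : hh k = 0 := by
  rw [hh, if_neg (by omega), if_neg (by omega)]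

lemma hh_zero : hh 0 = 1 := by rw [hh]; norm_num

/-- Multilinear expansion of a determinant of a sum of rows, with scalar. -/
lemma det_expand {N : ℕ} {R : Type*} [CommRing R] (t : R) (A B : Matrix (Fin N) (Fin N) R) :
    (Matrix.of fun i j => t * B i j + A i j).det
      = ∑ S : Finset (Fin N),
          t ^ S.card * (Matrix.of fun i j => if i ∈ S then B i j else A i j).det := by
  classical
  have h1 : (Matrix.of fun i j => t * B i j + A i j)
      = ((fun i => t • B i) + fun i => A i : Fin N → Fin N → R) := by
    ext i j
    simp [smul_eq_mul]
  rw [h1]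
  show ((Matrix.detRowAlternating (n := Fin N) (R := R)).toMultilinearMap
      ((fun i => t • B i) + fun i => A i) : R) = _
  rw [(Matrix.detRowAlternating (n := Fin N) (R := R)).toMultilinearMap.map_add_univ
    (fun i => t • B i) (fun i => A i)]
  refine Finset.sum_congr rfl fun S _ => ?_
  have h2 : S.piecewise (fun i => t • B i) (fun i => A i)
      = S.piecewise (fun i => t • (S.piecewise B A) i) (S.piecewise B A) := by
    funext i
    by_cases hi : i ∈ S <;> simp [Finset.piecewise, hi]
  show ((Matrix.detRowAlternating (n := Fin N) (R := R)).toMultilinearMap _ : R) = _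
  rw [h2, (Matrix.detRowAlternating (n := Fin N) (R := R)).toMultilinearMap.map_piecewise_smul
    (fun _ => t) (S.piecewise B A) S]
  simp only [Finset.prod_const, smul_eq_mul]
  congr 1
  show Matrix.det _ = Matrix.det _
  congr 1
  funext i j
  by_cases hi : i ∈ S <;> simp [Finset.piecewise, hi]

lemma coeff_X_pow_mul_C {R : Type*} [CommRing R] (k p : ℕ) (x : R) :
    ((Polynomial.X : R[X]) ^ k * Polynomial.C x).coeff p = if k = p then x else 0 := by
  rw [mul_comm, Polynomial.coeff_mul_X_pow', Polynomial.coeff_C]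
  split_ifs with h1 h2 h3 <;> first | rfl | omega

lemma card_filter_le (n m : ℕ) (hm : m ≤ n) :
    (Finset.univ.filter fun j : Fin n => m ≤ (j : ℕ)).card = n - m := by
  rcases lt_or_eq_of_le hm with h | h
  · have he : (Finset.univ.filter fun j : Fin n => m ≤ (j : ℕ))
        = Finset.Ici (⟨m, h⟩ : Fin n) := by
      ext j
      simp [Fin.le_def]
    rw [he, Fin.card_Ici]
  · subst h
    have he : (Finset.univ.filter fun j : Fin m => m ≤ (j : ℕ)) = ∅ := by
      ext j
      have := j.isLt
      simp only [Finset.mem_filter, Finset.mem_univ, true_and, Finset.notMem_empty, iff_false]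
      omega
    simp [he]

lemma suffix_of_closed {n p : ℕ} (hp : p ≤ n) (S : Finset (Fin n)) (hcard : S.card = p)
    (hcl : ∀ j : Fin n, j ∈ S → ∀ k : Fin n, (k : ℕ) = (j : ℕ) + 1 → k ∈ S) :
    S = Finset.univ.filter fun j : Fin n => n - p ≤ (j : ℕ) := by
  have up : ∀ (d : ℕ) (j : Fin n), j ∈ S → ∀ k : Fin n, (k : ℕ) = (j : ℕ) + d → k ∈ S := by
    intro d
    induction d with
    | zero => intro j hj k hk; rwa [show k = j from Fin.ext (by omega)]
    | succ d ih =>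
      intro j hj k hk
      have hd : (j : ℕ) + d < n := by omega
      exact hcl ⟨(j : ℕ) + d, hd⟩ (ih j hj _ rfl) k (by simpa using by omega)
  have hsub : S ⊆ Finset.univ.filter fun j : Fin n => n - p ≤ (j : ℕ) := by
    intro j hj
    simp only [Finset.mem_filter, Finset.mem_univ, true_and]
    by_contra hlt
    have hT : (Finset.univ.filter fun k : Fin n => (j : ℕ) ≤ (k : ℕ)) ⊆ S := by
      intro k hk
      simp only [Finset.mem_filter, Finset.mem_univ, true_and] at hk
      exact up ((k : ℕ) - (j : ℕ)) j hj k (by omega)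
    have := Finset.card_le_card hT
    rw [card_filter_le n j (le_of_lt j.isLt), hcard] at this
    omega
  apply Finset.eq_of_subset_of_card_le hsub
  rw [card_filter_le n (n - p) (by omega), hcard]
  omega

/-- Jacobi–Trudi determinants ignore trailing zero rows. -/
lemma schur_trailing {n q p : ℕ} (hqp : q + p = n) (lam : Fin n → ℤ)
    (hz : ∀ i : Fin n, q ≤ (i : ℕ) → lam i = 0) :
    schur lam = schur (fun a : Fin q => lam (Fin.castLE (by omega) a)) := by
  classical
  have hq : q ≤ n := by omega
  set e : Fin q ⊕ Fin p ≃ Fin n := finSumFinEquiv.trans (finCongr hqp) with he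
  have e1 : ∀ a : Fin q, ((e (Sum.inl a) : Fin n) : ℕ) = (a : ℕ) := by
    intro a; simp [he, finCongr_apply]
  have e2 : ∀ b : Fin p, ((e (Sum.inr b) : Fin n) : ℕ) = q + (b : ℕ) := by
    intro b; simp [he, finCongr_apply]
  have hL : ∀ a : Fin q, lam (e (Sum.inl a)) = lam (Fin.castLE hq a) :=
    fun a => congrArg lam (Fin.ext ((e1 a).trans rfl))
  rw [schur, ← Matrix.det_submatrix_equiv_self e]
  have hblocks :
      ((Matrix.of fun i j : Fin n => hh (lam i - ((i : ℕ) : ℤ) + ((j : ℕ) : ℤ))).submatrix e e)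
        = Matrix.fromBlocks
            (Matrix.of fun a b : Fin q =>
              hh (lam (Fin.castLE hq a) - ((a : ℕ) : ℤ) + ((b : ℕ) : ℤ)))
            (Matrix.of fun (a : Fin q) (b : Fin p) =>
              hh (lam (Fin.castLE hq a) - ((a : ℕ) : ℤ) + ((q : ℕ) : ℤ) + ((b : ℕ) : ℤ)))
            0
            (Matrix.of fun a b : Fin p => hh (((b : ℕ) : ℤ) - ((a : ℕ) : ℤ))) := by
    refine Matrix.ext fun i j => ?_
    cases i with
    | inl a =>
      cases j with
      | inl b =>
        simp only [Matrix.submatrix_apply, Matrix.fromBlocks_apply₁₁, Matrix.of_apply]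
        rw [hL a]
        first
          | (congr 1; simp only [e1, e2]; push_cast; ring)
          | (congr 1; simp only [e1, e2]; push_cast)
          | (congr 1; simp only [e1, e2])
          | rfl
      | inr b =>
        simp only [Matrix.submatrix_apply, Matrix.fromBlocks_apply₁₂, Matrix.of_apply]
        rw [hL a]
        first
          | (congr 1; simp only [e1, e2]; push_cast; ring)
          | (congr 1; simp only [e1, e2]; push_cast)
          | (congr 1; simp only [e1, e2])
          | rfl
    | inr a =>
      cases j with
      | inl b =>
        simp only [Matrix.submatrix_apply, Matrix.fromBlocks_apply₂₁, Matrix.of_apply,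
          Matrix.zero_apply]
        rw [hz _ (by rw [e2]; omega)]
        apply hh_neg
        have := b.isLt
        simp only [e1, e2]
        push_cast
        omega
      | inr b =>
        simp only [Matrix.submatrix_apply, Matrix.fromBlocks_apply₂₂, Matrix.of_apply]
        rw [hz _ (by rw [e2]; omega)]
        first
          | (congr 1; simp only [e1, e2]; push_cast; ring)
          | (congr 1; simp only [e1, e2]; push_cast)
          | (congr 1; simp only [e1, e2])
          | rfl
  rw [hblocks, Matrix.det_fromBlocks_zero₂₁]
  have htri : (Matrix.of fun a b : Fin p => hh (((b : ℕ) : ℤ) - ((a : ℕ) : ℤ))).det = 1 := by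
    rw [Matrix.det_of_upperTriangular]
    · simp [hh_zero]
    · intro a b hb
      simp only [Matrix.of_apply]
      apply hh_neg
      have : (b : ℕ) < (a : ℕ) := hb
      push_cast
      omega
  rw [htri, mul_one, schur]

/-- The skipped-column determinant factors as `schur(λ') * e_p`. -/
lemma skipped_col {n q p : ℕ} (hqp : q + p = n) (lam : Fin n → ℤ)
    (hz : ∀ i : Fin n, q ≤ (i : ℕ) → lam i = 0) :
    (Matrix.of fun i j : Fin n =>
        hh (lam i - ((i : ℕ) : ℤ) + ((j : ℕ) : ℤ) + if q ≤ (j : ℕ) then 1 else 0)).det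
      = schur (fun a : Fin q => lam (Fin.castLE (by omega) a)) * ee p := by
  classical
  have hq : q ≤ n := by omega
  set e : Fin q ⊕ Fin p ≃ Fin n := finSumFinEquiv.trans (finCongr hqp) with he
  have e1 : ∀ a : Fin q, ((e (Sum.inl a) : Fin n) : ℕ) = (a : ℕ) := by
    intro a; simp [he, finCongr_apply]
  have e2 : ∀ b : Fin p, ((e (Sum.inr b) : Fin n) : ℕ) = q + (b : ℕ) := by
    intro b; simp [he, finCongr_apply]
  have hL : ∀ a : Fin q, lam (e (Sum.inl a)) = lam (Fin.castLE hq a) :=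
    fun a => congrArg lam (Fin.ext ((e1 a).trans rfl))
  rw [← Matrix.det_submatrix_equiv_self e]
  have hblocks :
      ((Matrix.of fun i j : Fin n =>
          hh (lam i - ((i : ℕ) : ℤ) + ((j : ℕ) : ℤ) + if q ≤ (j : ℕ) then 1 else 0)).submatrix
          e e)
        = Matrix.fromBlocks
            (Matrix.of fun a b : Fin q =>
              hh (lam (Fin.castLE hq a) - ((a : ℕ) : ℤ) + ((b : ℕ) : ℤ)))
            (Matrix.of fun (a : Fin q) (b : Fin p) =>
              hh (lam (Fin.castLE hq a) - ((a : ℕ) : ℤ) + ((q : ℕ) : ℤ) + ((b : ℕ) : ℤ) + 1))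
            0
            (Matrix.of fun a b : Fin p =>
              hh ((1 : ℤ) - ((a : ℕ) : ℤ) + ((b : ℕ) : ℤ))) := by
    refine Matrix.ext fun i j => ?_
    cases i with
    | inl a =>
      cases j with
      | inl b =>
        simp only [Matrix.submatrix_apply, Matrix.fromBlocks_apply₁₁, Matrix.of_apply]
        rw [hL a, if_neg (by rw [e1 b]; have := b.isLt; omega)]
        first
          | (congr 1; simp only [e1, e2]; push_cast; ring)
          | (congr 1; simp only [e1, e2]; push_cast)
          | (congr 1; simp only [e1, e2])
          | rfl
      | inr b =>
        simp only [Matrix.submatrix_apply, Matrix.fromBlocks_apply₁₂, Matrix.of_apply]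
        rw [hL a, if_pos (by rw [e2 b]; omega)]
        first
          | (congr 1; simp only [e1, e2]; push_cast; ring)
          | (congr 1; simp only [e1, e2]; push_cast)
          | (congr 1; simp only [e1, e2])
          | rfl
    | inr a =>
      cases j with
      | inl b =>
        simp only [Matrix.submatrix_apply, Matrix.fromBlocks_apply₂₁, Matrix.of_apply,
          Matrix.zero_apply]
        rw [hz _ (by rw [e2]; omega), if_neg (by rw [e1 b]; have := b.isLt; omega)]
        apply hh_neg
        have := b.isLt
        simp only [e1, e2]
        push_cast
        omega
      | inr b =>
        simp only [Matrix.submatrix_apply, Matrix.fromBlocks_apply₂₂, Matrix.of_apply]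
        rw [hz _ (by rw [e2]; omega), if_pos (by rw [e2 b]; omega)]
        first
          | (congr 1; simp only [e1, e2]; push_cast; ring)
          | (congr 1; simp only [e1, e2]; push_cast)
          | (congr 1; simp only [e1, e2])
          | rfl
  rw [hblocks, Matrix.det_fromBlocks_zero₂₁, schur, ee, schur]

end PieriAux

/-- The alternative second Pieri rule: if λ is a partition of length n with
λ_{n-p+1} = ⋯ = λ_n = 0 and p ∈ {0,…,n}, then s_λ · e_p = Σ_{β ∈ {0,1}^n, |β| = p} s_{λ+β}.
The tuples β ∈ {0,1}^n with |β| = p are encoded by subsets s ⊆ [n] of cardinality p. -/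
theorem alt_second_pieri (n : ℕ) (p : ℕ) (hp : p ≤ n) (lam : Fin n → ℤ)
    (hanti : ∀ i j : Fin n, i ≤ j → lam j ≤ lam i)
    (hpos : ∀ i, 0 ≤ lam i)
    (hzero : ∀ i : Fin n, n - p ≤ (i : ℕ) → lam i = 0) :
    schur lam * ee p
      = ∑ s ∈ Finset.powersetCard p (Finset.univ : Finset (Fin n)),
          schur (fun i => lam i + if i ∈ s then 1 else 0) := by
  classical
  open Matrix Polynomial in
  set q := n - p with hqdef
  have hqp : q + p = n := by omega
  -- the two base matrices over Λ
  set AA : Matrix (Fin n) (Fin n) Lambda :=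
    Matrix.of (fun i j : Fin n => hh (lam i - ((i : ℕ) : ℤ) + ((j : ℕ) : ℤ))) with hAA
  set BB : Matrix (Fin n) (Fin n) Lambda :=
    Matrix.of (fun i j : Fin n => hh (lam i - ((i : ℕ) : ℤ) + ((j : ℕ) : ℤ) + 1)) with hBB
  -- the polynomial matrix
  set M : Matrix (Fin n) (Fin n) (Polynomial Lambda) :=
    Matrix.of (fun i j : Fin n =>
      (Polynomial.X : Polynomial Lambda) * (BB.map Polynomial.C) i j
        + (AA.map Polynomial.C) i j) with hM
  -- row expansion
  have expand1 : M.det = ∑ S : Finset (Fin n),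
      (Polynomial.X : Polynomial Lambda) ^ S.card
        * Polynomial.C (schur fun i => lam i + if i ∈ S then 1 else 0) := by
    rw [hM, det_expand]
    refine Finset.sum_congr rfl fun S _ => ?_
    congr 1
    have hmat : (Matrix.of fun i j : Fin n =>
        if i ∈ S then (BB.map Polynomial.C) i j else (AA.map Polynomial.C) i j)
        = (Matrix.of fun i j : Fin n =>
            hh ((lam i + if i ∈ S then 1 else 0) - ((i : ℕ) : ℤ) + ((j : ℕ) : ℤ))).map
            Polynomial.C := by
      refine Matrix.ext fun i j => ?_
      by_cases hi : i ∈ S <;>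
        simp only [Matrix.of_apply, Matrix.map_apply, hAA, hBB, hi, if_true, if_false] <;>
        (congr 1; ring)
    rw [hmat]
    exact (RingHom.map_det Polynomial.C _).symm
  -- column expansion
  set DD : Finset (Fin n) → Lambda := fun S =>
    (Matrix.of fun j i : Fin n => if j ∈ S then BB i j else AA i j).det with hDD
  have expand2 : M.det = ∑ S : Finset (Fin n),
      (Polynomial.X : Polynomial Lambda) ^ S.card * Polynomial.C (DD S) := by
    rw [← Matrix.det_transpose M]
    have hMt : Mᵀ = Matrix.of (fun j i : Fin n =>
        (Polynomial.X : Polynomial Lambda) * ((BB.map Polynomial.C)ᵀ) j i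
          + ((AA.map Polynomial.C)ᵀ) j i) := by
      refine Matrix.ext fun j i => ?_
      simp [hM]
    rw [hMt, det_expand]
    refine Finset.sum_congr rfl fun S _ => ?_
    congr 1
    have hmat : (Matrix.of fun j i : Fin n =>
        if j ∈ S then ((BB.map Polynomial.C)ᵀ) j i else ((AA.map Polynomial.C)ᵀ) j i)
        = (Matrix.of fun j i : Fin n => if j ∈ S then BB i j else AA i j).map
            Polynomial.C := by
      refine Matrix.ext fun j i => ?_
      by_cases hj : j ∈ S <;>
        simp [Matrix.map_apply, Matrix.transpose_apply, hj]
    rw [hmat]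
    exact (RingHom.map_det Polynomial.C _).symm
  -- compare coefficients of X^p
  have hcoeff : ∑ S ∈ Finset.powersetCard p (Finset.univ : Finset (Fin n)),
      schur (fun i => lam i + if i ∈ S then 1 else 0)
      = ∑ S ∈ Finset.powersetCard p (Finset.univ : Finset (Fin n)), DD S := by
    have h12 := congrArg (fun f : Polynomial Lambda => f.coeff p) (expand1.symm.trans expand2)
    simp only [Polynomial.finset_sum_coeff, coeff_X_pow_mul_C] at h12
    have hps : (Finset.univ : Finset (Finset (Fin n))).filter (fun S => S.card = p)
        = Finset.powersetCard p (Finset.univ : Finset (Fin n)) := by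
      rw [Finset.powersetCard_eq_filter, Finset.powerset_univ]
    rw [← hps]
    rw [Finset.sum_filter, Finset.sum_filter]
    exact h12
  -- the suffix set
  set S0 : Finset (Fin n) := Finset.univ.filter (fun j : Fin n => q ≤ (j : ℕ)) with hS0
  have hS0card : S0.card = p := by
    rw [hS0, hqdef, card_filter_le n (n - p) (by omega)]
    omega
  -- all other summands vanish
  have hvanish : ∀ S ∈ Finset.powersetCard p (Finset.univ : Finset (Fin n)),
      S ≠ S0 → DD S = 0 := by
    intro S hS hne
    have hScard : S.card = p := (Finset.mem_powersetCard.mp hS).2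
    have hnotcl : ¬ (∀ j : Fin n, j ∈ S → ∀ k : Fin n, (k : ℕ) = (j : ℕ) + 1 → k ∈ S) := by
      intro hcl
      exact hne (suffix_of_closed hp S hScard hcl)
    push_neg at hnotcl
    obtain ⟨j, hj, k, hk, hkn⟩ := hnotcl
    rw [hDD]
    apply Matrix.det_zero_of_row_eq (i := j) (j := k)
    · exact fun hjk => hkn (hjk ▸ hj)
    · funext i
      simp only [Matrix.of_apply, hj, if_true, hkn, if_false, hAA, hBB]
      have hcast : ((k : ℕ) : ℤ) = ((j : ℕ) : ℤ) + 1 := by exact_mod_cast hk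
      congr 1
      rw [hcast]
      first
        | ring
        | rfl
  -- conclude
  rw [hcoeff, Finset.sum_eq_single_of_mem S0
    (Finset.mem_powersetCard.mpr ⟨Finset.subset_univ _, hS0card⟩) hvanish]
  have hDDS0 : DD S0 = (Matrix.of fun i j : Fin n =>
      hh (lam i - ((i : ℕ) : ℤ) + ((j : ℕ) : ℤ) + if q ≤ (j : ℕ) then 1 else 0)).det := by
    show (Matrix.of fun j i : Fin n => if j ∈ S0 then BB i j else AA i j).det = _
    have htr : (Matrix.of fun j i : Fin n => if j ∈ S0 then BB i j else AA i j)
        = (Matrix.of fun i j : Fin n =>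
            hh (lam i - ((i : ℕ) : ℤ) + ((j : ℕ) : ℤ) + if q ≤ (j : ℕ) then 1 else 0))ᵀ := by
      refine Matrix.ext fun j i => ?_
      by_cases hjq : q ≤ (j : ℕ)
      · have hjm : j ∈ S0 := by simp [hS0, hjq]
        simp only [Matrix.of_apply, Matrix.transpose_apply, hjm, if_true, hjq, hBB]
      · have hjm : j ∉ S0 := by simp [hS0, hjq]
        simp only [Matrix.of_apply, Matrix.transpose_apply, hjm, if_false, hjq, hAA, add_zero]
    rw [htr, Matrix.det_transpose]
  rw [hDDS0, skipped_col hqp lam hzero, schur_trailing hqp lam hzero]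
end

section
/- Let NSym be the free associative algebra over a commutative ring k on generators H_1, H_2, H_3, … (with H_0 := 1 and H_k := 0 for k < 0). For m ∈ ℕ and α ∈ ℤ^m, set H_α := H_{α_1} H_{α_2} ⋯ H_{α_m} and define the immaculate function 𝔖_α := Σ_{σ ∈ S_m} (-1)^σ H_{(α_1+σ(1)-1, α_2+σ(2)-2, …, α_m+σ(m)-m)}. Then for any n ∈ ℕ, α ∈ ℤ^n, and s ∈ ℤ: 𝔖_α H_s = Σ_β 𝔖_β, where the sum runs over all β ∈ ℤ^{n+1} with |β| = |α| + s, α_i ≤ β_i for all i ∈ [n], and 0 ≤ β_{n+1}. -/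
/-- The generator H_m of NSym = k⟨H₁, H₂, …⟩ (the free associative algebra on generators
indexed by ℕ, where the generator indexed by i is H_{i+1}), extended by H_0 = 1 and
H_m = 0 for m < 0. -/
noncomputable def Hgen (k : Type*) [CommRing k] (m : ℤ) : FreeAlgebra k ℕ :=
  if 0 < m then FreeAlgebra.ι k (m.toNat - 1) else if m = 0 then 1 else 0

/-- The immaculate function 𝔖_α ∈ NSym for α ∈ ℤ^m:
𝔖_α = Σ_{σ ∈ S_m} (-1)^σ H_{α_1+σ(1)-1} H_{α_2+σ(2)-2} ⋯ H_{α_m+σ(m)-m}. -/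
noncomputable def immac (k : Type*) [CommRing k] {m : ℕ} (α : Fin m → ℤ) :
    FreeAlgebra k ℕ :=
  ∑ σ : Equiv.Perm (Fin m), (Equiv.Perm.sign σ : ℤ) •
    (List.ofFn fun i => Hgen k (α i + ((σ i : ℕ) : ℤ) - ((i : ℕ) : ℤ))).prod

/-!
Index positions from `0` and expand both sides in the words `H_γ = H_{γ_0} ⋯ H_{γ_n}`. On the
right, the substitution `γ = β + (τ - id)` makes the coefficient of `H_γ` (for `|γ| = |α| + s`;
otherwise both coefficients vanish) the signed count `∑_τ sgn τ [τ(j) ≤ m_j for all j]` with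
`m_j = γ_j - α_j + j` and `α_n = 0`: the determinant of the 0/1 matrix whose `j`-th column is
the indicator of `{0, …, m_j}`. Differencing consecutive rows turns each column into the unit
vector at `min(m_j, n)` (or zero if `m_j < 0`). If `γ_n ≥ 0`, the last column is the last unit
vector, and expanding along it leaves `∑_σ sgn σ [σ(j) = m_j for all j < n]`, the coefficient
of `H_γ` in `𝔖_α H_s`. If `γ_n < 0`, then `H_γ = 0`.
-/

open Finset Equiv Equiv.Perm

namespace Matrix

variable {R : Type*} [CommRing R] {n : ℕ}

theorem det_of_le_eq_det_of_eq_min (m : Fin (n + 1) → ℤ) :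
    det (of fun i j : Fin (n + 1) => if ((i : ℕ) : ℤ) ≤ m j then (1 : R) else 0)
      = det (of fun i j : Fin (n + 1) => if ((i : ℕ) : ℤ) = min (m j) n then (1 : R) else 0) := by
  set U : Matrix (Fin (n + 1)) (Fin (n + 1)) R := of fun i j => if i ≤ j then 1 else 0
  have hU : U.det = 1 := by
    rw [det_of_isUpperTriangular (M := U) fun i j (hij : j < i) => if_neg (not_le.2 hij)]
    simp [U]
  -- `U` sends the unit vector `e_c` to the indicator vector of `{0, …, c}`.
  suffices h : (of fun i j : Fin (n + 1) => if ((i : ℕ) : ℤ) ≤ m j then (1 : R) else 0)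
      = U * of fun i j : Fin (n + 1) => if ((i : ℕ) : ℤ) = min (m j) n then (1 : R) else 0 by
    rw [h, det_mul, hU, one_mul]
  ext i j
  simp only [mul_apply, U, of_apply, mul_boole, Fin.le_def]
  have hi : (i : ℕ) ≤ n := Fin.is_le i
  have hc : min (m j) n = m j ∨ min (m j) n = n := min_choice _ _
  have hcm : min (m j) n ≤ m j := min_le_left _ _
  have hcn : min (m j) n ≤ n := min_le_right _ _
  generalize min (m j) n = c at hc hcm hcn ⊢
  by_cases h0 : 0 ≤ c
  · obtain ⟨k₀, hk₀⟩ : ∃ k₀ : Fin (n + 1), ((k₀ : ℕ) : ℤ) = c :=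
      ⟨⟨c.toNat, by omega⟩, by simp [h0]⟩
    rw [Finset.sum_eq_single_of_mem k₀ (mem_univ _), if_pos hk₀]
    · exact if_congr (by omega) rfl rfl
    · intro k _ hk
      rw [if_neg]
      intro h
      exact hk (Fin.ext (by omega))
  · rw [if_neg (by omega), Finset.sum_eq_zero]
    intro k _
    rw [if_neg (by omega)]

theorem det_of_le_eq_det_of_eq_castSucc (m : Fin (n + 1) → ℤ) (hm : (n : ℤ) ≤ m (Fin.last n)) :
    det (of fun i j : Fin (n + 1) => if ((i : ℕ) : ℤ) ≤ m j then (1 : R) else 0)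
      = det (of fun i j : Fin n => if ((i : ℕ) : ℤ) = m j.castSucc then (1 : R) else 0) := by
  rw [det_of_le_eq_det_of_eq_min, det_succ_column _ (Fin.last n),
    Finset.sum_eq_single (Fin.last n)]
  · simp only [of_apply, min_eq_right hm, Fin.val_last, if_pos, Fin.succAbove_last]
    rw [(Even.add_self n).neg_one_pow, mul_one, one_mul]
    congr 1
    ext i j
    simp only [submatrix_apply, of_apply, Fin.val_castSucc]
    exact if_congr (by omega) rfl rfl
  · intro i _ hi
    rw [of_apply, if_neg, mul_zero, zero_mul]
    intro h
    exact hi (Fin.ext (by rw [Fin.val_last]; omega))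
  · simp

end Matrix

theorem Equiv.Perm.sum_sign_ite_le_eq {n : ℕ} (m : Fin (n + 1) → ℤ)
    (hm : (n : ℤ) ≤ m (Fin.last n)) :
    ∑ τ : Perm (Fin (n + 1)), (if ∀ j, ((τ j : ℕ) : ℤ) ≤ m j then (sign τ : ℤ) else 0)
      = ∑ σ : Perm (Fin n), (if ∀ j, ((σ j : ℕ) : ℤ) = m j.castSucc then (sign σ : ℤ) else 0) := by
  have h := Matrix.det_of_le_eq_det_of_eq_castSucc (R := ℤ) m hm
  simp only [Matrix.det_apply', Matrix.of_apply, Fintype.prod_boole, mul_boole, Int.cast_id] at h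
  convert h using 3

theorem sum_smul_sum_eq_finsum {ι α R M : Type*} [Fintype ι] [DecidableEq α] [Semiring R]
    [AddCommMonoid M] [Module R M] (S : ι → Finset α) (c : ι → R) (f : α → M) :
    ∑ i, c i • ∑ a ∈ S i, f a = ∑ᶠ a, (∑ i, if a ∈ S i then c i else 0) • f a := by
  have hsupp : ∀ i, Function.support (fun a => if a ∈ S i then c i • f a else 0) ⊆ S i :=
    fun i a ha => by_contra fun h => ha (if_neg h)
  simp only [Finset.sum_smul, ite_smul, zero_smul]
  rw [finsum_sum_comm _ _ fun i _ => (S i).finite_toSet.subset (hsupp i)]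
  refine Finset.sum_congr rfl fun i _ => ?_
  rw [Finset.smul_sum, finsum_eq_sum_of_support_subset _ (hsupp i)]
  exact Finset.sum_congr rfl fun a ha => (if_pos ha).symm

theorem Fin.eq_snoc_iff_of_sum_eq {M : Type*} [AddCommGroup M] {n : ℕ} (γ : Fin (n + 1) → M)
    (v : Fin n → M) (s : M) (h : ∑ i, γ i = ∑ i, v i + s) :
    γ = Fin.snoc v s ↔ ∀ j, γ j.castSucc = v j := by
  refine ⟨fun h j => by rw [h, Fin.snoc_castSucc], fun hv => ?_⟩
  have hlast : γ (Fin.last n) = s := by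
    rw [Fin.sum_univ_castSucc, Finset.sum_congr rfl fun j _ => hv j] at h
    exact add_left_cancel h
  ext j
  induction j using Fin.lastCases with
  | last => rw [Fin.snoc_last, hlast]
  | cast j => rw [Fin.snoc_castSucc, hv]

theorem Fin.snoc_le_iff {α : Type*} [LE α] {n : ℕ} (v : Fin n → α) (x : α)
    (β : Fin (n + 1) → α) :
    (Fin.snoc v x : Fin (n + 1) → α) ≤ β ↔ (∀ i, v i ≤ β i.castSucc) ∧ x ≤ β (Fin.last n) := by
  simp only [Pi.le_def, Fin.forall_fin_succ', Fin.snoc_castSucc, Fin.snoc_last]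

theorem finite_setOf_le_sum_eq {ι : Type*} [Fintype ι] (L : ι → ℤ) (N : ℤ) :
    {β : ι → ℤ | L ≤ β ∧ ∑ i, β i = N}.Finite := by
  classical
  refine (Set.finite_Icc L (L + fun _ : ι => N - ∑ i, L i)).subset
    fun (β : ι → ℤ) ⟨hL, hN⟩ => ⟨hL, fun i => ?_⟩
  have : β i - L i ≤ ∑ j, (β j - L j) :=
    Finset.single_le_sum (f := fun j => β j - L j) (fun j _ => sub_nonneg.2 (hL j)) (mem_univ i)
  rw [Finset.sum_sub_distrib, hN] at this
  simp only [Pi.add_apply]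
  omega

noncomputable def Hprod (k : Type*) [CommRing k] {m : ℕ} (γ : Fin m → ℤ) : FreeAlgebra k ℕ :=
  (List.ofFn fun i => Hgen k (γ i)).prod

def permShift {m : ℕ} (τ : Perm (Fin m)) (i : Fin m) : ℤ :=
  ((τ i : ℕ) : ℤ) - ((i : ℕ) : ℤ)

theorem sum_permShift {m : ℕ} (τ : Perm (Fin m)) : ∑ i, permShift τ i = 0 := by
  simp only [permShift, Finset.sum_sub_distrib, Equiv.sum_comp τ (fun j => ((j : ℕ) : ℤ)), sub_self]

theorem sum_add_permShift {m : ℕ} (β : Fin m → ℤ) (τ : Perm (Fin m)) :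
    ∑ i, (β + permShift τ) i = ∑ i, β i := by
  simp only [Pi.add_apply, Finset.sum_add_distrib, sum_permShift, add_zero]

theorem sum_sub_permShift {m : ℕ} (β : Fin m → ℤ) (τ : Perm (Fin m)) :
    ∑ i, (β - permShift τ) i = ∑ i, β i := by
  simp only [Pi.sub_apply, Finset.sum_sub_distrib, sum_permShift, sub_zero]

section

variable (k : Type*) [CommRing k]

theorem Hprod_snoc {n : ℕ} (γ : Fin n → ℤ) (x : ℤ) :
    Hprod k (Fin.snoc γ x) = Hprod k γ * Hgen k x := by
  simp only [Hprod, List.ofFn_succ', List.prod_concat, Fin.snoc_castSucc, Fin.snoc_last]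

theorem Hprod_eq_zero_of_neg {m : ℕ} {γ : Fin m → ℤ} {j : Fin m} (hj : γ j < 0) :
    Hprod k γ = 0 :=
  List.prod_eq_zero (List.mem_ofFn.2 ⟨j, by simp [Hgen, not_lt.2 hj.le, hj.ne]⟩)

theorem immac_eq_sum_Hprod {m : ℕ} (β : Fin m → ℤ) :
    immac k β = ∑ τ : Perm (Fin m), (sign τ : ℤ) • Hprod k (β + permShift τ) := by
  simp only [immac, Hprod, permShift, Pi.add_apply, add_sub_assoc]

theorem immac_mul_Hgen {n : ℕ} (α : Fin n → ℤ) (s : ℤ) :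
    immac k α * Hgen k s
      = ∑ σ : Perm (Fin n), (sign σ : ℤ) • Hprod k (Fin.snoc (α + permShift σ) s) := by
  simp only [immac_eq_sum_Hprod, Finset.sum_mul, smul_mul_assoc, Hprod_snoc]

theorem immac_mul_Hgen_eq_finsum {n : ℕ} (α : Fin n → ℤ) (s : ℤ) :
    immac k α * Hgen k s = ∑ᶠ γ, (∑ σ : Perm (Fin n),
      if γ = Fin.snoc (α + permShift σ) s then (sign σ : ℤ) else 0) • Hprod k γ := by
  classical
  have h := sum_smul_sum_eq_finsum (fun σ : Perm (Fin n) => {Fin.snoc (α + permShift σ) s})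
    (fun σ => (sign σ : ℤ)) (Hprod k)
  simp only [Finset.sum_singleton, Finset.mem_singleton] at h
  rw [immac_mul_Hgen, h]

theorem sum_immac_eq_finsum {m : ℕ} (T : Finset (Fin m → ℤ)) :
    ∑ β ∈ T, immac k β = ∑ᶠ γ, (∑ τ : Perm (Fin m),
      if γ - permShift τ ∈ T then (sign τ : ℤ) else 0) • Hprod k γ := by
  classical
  calc ∑ β ∈ T, immac k β
      = ∑ τ : Perm (Fin m), (sign τ : ℤ) • ∑ β ∈ T, Hprod k (β + permShift τ) := by
        simp only [immac_eq_sum_Hprod, Finset.smul_sum]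
        exact Finset.sum_comm
    _ = ∑ τ : Perm (Fin m), (sign τ : ℤ) •
          ∑ γ ∈ T.map (Equiv.addRight (permShift τ)).toEmbedding, Hprod k γ := by
        simp only [Finset.sum_map, Equiv.coe_toEmbedding, Equiv.coe_addRight]
    _ = _ := by
        rw [sum_smul_sum_eq_finsum]
        simp only [Finset.mem_map_equiv, Equiv.addRight_symm_apply, ← sub_eq_add_neg]

end

open Classical in
theorem sum_sign_ite_snoc_le_eq {n : ℕ} (α : Fin n → ℤ) (s : ℤ) (γ : Fin (n + 1) → ℤ)
    (hγ : 0 ≤ γ (Fin.last n)) :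
    ∑ τ : Perm (Fin (n + 1)), (if Fin.snoc α 0 ≤ γ - permShift τ
        ∧ ∑ i, (γ - permShift τ) i = ∑ i, α i + s then (sign τ : ℤ) else 0)
      = ∑ σ : Perm (Fin n), (if γ = Fin.snoc (α + permShift σ) s then (sign σ : ℤ) else 0) := by
  by_cases hsum : ∑ i, γ i = ∑ i, α i + s
  · set m : Fin (n + 1) → ℤ := fun j => γ j - (Fin.snoc α 0 : Fin (n + 1) → ℤ) j + (j : ℕ)
    have hτ : ∀ τ : Perm (Fin (n + 1)), (Fin.snoc α 0 ≤ γ - permShift τ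
        ∧ ∑ i, (γ - permShift τ) i = ∑ i, α i + s) ↔ ∀ j, ((τ j : ℕ) : ℤ) ≤ m j := by
      intro τ
      rw [sum_sub_permShift, hsum, eq_self_iff_true, and_true, Pi.le_def]
      simp only [Pi.sub_apply, permShift, m]
      exact forall_congr' fun j => by omega
    have hσ : ∀ σ : Perm (Fin n), γ = Fin.snoc (α + permShift σ) s
        ↔ ∀ j, ((σ j : ℕ) : ℤ) = m j.castSucc := by
      intro σ
      rw [Fin.eq_snoc_iff_of_sum_eq γ _ s (by rw [sum_add_permShift, hsum])]
      simp only [m, Fin.snoc_castSucc, Pi.add_apply, permShift, Fin.val_castSucc]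
      exact forall_congr' fun j => by omega
    simp only [hτ, hσ]
    exact sum_sign_ite_le_eq m (by simp [m, hγ])
  · rw [Finset.sum_eq_zero fun τ _ => if_neg ?_, Finset.sum_eq_zero fun σ _ => if_neg ?_]
    · rintro rfl
      exact hsum (by rw [Fin.sum_snoc, sum_add_permShift])
    · rintro ⟨-, h⟩
      exact hsum (by rwa [sum_sub_permShift] at h)

/-- The right-Pieri rule for immaculate functions:
𝔖_α · H_s = Σ_{β ∈ ℤ^{n+1}, |β| = |α| + s, α_i ≤ β_i (i ∈ [n]), 0 ≤ β_{n+1}} 𝔖_β. -/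
theorem immaculate_right_pieri (k : Type*) [CommRing k] (n : ℕ)
    (α : Fin n → ℤ) (s : ℤ) :
    immac k α * Hgen k s
      = ∑ᶠ (β : Fin (n + 1) → ℤ)
          (_ : (∑ i, β i = (∑ i, α i) + s)
            ∧ (∀ i : Fin n, α i ≤ β i.castSucc)
            ∧ 0 ≤ β (Fin.last n)),
          immac k β := by
  classical
  set T := (finite_setOf_le_sum_eq (Fin.snoc α 0 : Fin (n + 1) → ℤ) (∑ i, α i + s)).toFinset
  have hT : ∀ β, ((∑ i, β i = (∑ i, α i) + s) ∧ (∀ i : Fin n, α i ≤ β i.castSucc)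
      ∧ 0 ≤ β (Fin.last n)) ↔ β ∈ T := fun β => by
    simp only [T, Set.Finite.mem_toFinset, Set.mem_ofPred_eq, Fin.snoc_le_iff]
    tauto
  rw [finsum_cond_eq_sum_of_cond_iff _ fun {β} _ => hT β, sum_immac_eq_finsum,
    immac_mul_Hgen_eq_finsum]
  refine finsum_congr fun γ => ?_
  rcases lt_or_ge (γ (Fin.last n)) 0 with hneg | hγ
  · simp only [Hprod_eq_zero_of_neg k hneg, smul_zero]
  · simp only [T, Set.Finite.mem_toFinset, Set.mem_ofPred_eq]
    rw [sum_sign_ite_snoc_le_eq α s γ hγ]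
end
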